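/- arXiv:2208.07557 — 14 statements merged into one kernel-verified Lean document; each statement's English description precedes it below -/
import Mathlib

section
/- Let (A; ∧, d) be an SMB algebra over a congruence ~ and let θ be any congruence of (A; ∧, d). Then the quotient algebra A/θ is an SMB algebra over the congruence (~∨θ)/θ, i.e. over the relation {([x]_θ, [y]_θ) : (x,y) ∈ ~∨θ}. (Hence the class of SMB algebras is closed under homomorphic images.) -/
/-- An equivalence relation on `A` compatible with the binary operation `m`
and the ternary operation `d`, i.e. a congruence of the algebra `(A; m, d)`. -/
structure IsCongruence {A : Type*} (m : A → A → A) (d : A → A → A → A)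
    (θ : A → A → Prop) : Prop where
  equiv : Equivalence θ
  compat_m : ∀ {a a' b b'}, θ a a' → θ b b' → θ (m a b) (m a' b')
  compat_d : ∀ {a a' b b' c c'}, θ a a' → θ b b' → θ c c' → θ (d a b c) (d a' b' c')

/-- `(A; m, d)` is an SMB algebra over the congruence `r`. -/
structure IsSMB {A : Type*} (m : A → A → A) (d : A → A → A → A)
    (r : A → A → Prop) : Prop where
  cong : IsCongruence m d r
  idem_m : ∀ x, m x x = x
  idem_d : ∀ x, d x x x = x
  comm : ∀ x y, r (m x y) (m y x)
  assoc : ∀ x y z, r (m (m x y) z) (m x (m y z))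
  proj : ∀ a b, r a b → m a b = b
  mal_left : ∀ a b, r a b → d a b b = a
  mal_right : ∀ a b, r a b → d b b a = a

/-- `(A; m, d)` is a regular SMB algebra over the congruence `r`. -/
structure IsRegularSMB {A : Type*} (m : A → A → A) (d : A → A → A → A)
    (r : A → A → Prop) : Prop where
  smb : IsSMB m d r
  reg1 : ∀ a b c, r (d a b c) (m (m a b) c)
  reg2 : ∀ a b, r (m a b) b → m a b = b
  reg3 : ∀ x y z, d x y z = d (m (m y z) x) (m (m x z) y) (m (m x y) z)
  reg4 : ∀ x y, m (m x y) y = m x y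

/-- The principal congruence generated by the pair `(a, b)`: the smallest
congruence of `(A; m, d)` containing `(a, b)`. -/
def Cg {A : Type*} (m : A → A → A) (d : A → A → A → A) (a b : A) : A → A → Prop :=
  fun x y => ∀ θ : A → A → Prop, IsCongruence m d θ → θ a b → θ x y

/-- The join of two congruences: the smallest congruence of `(A; m, d)`
containing both `ρ` and `σ`. -/
def congJoin {A : Type*} (m : A → A → A) (d : A → A → A → A)
    (ρ σ : A → A → Prop) : A → A → Prop :=
  fun x y => ∀ θ : A → A → Prop, IsCongruence m d θ →
    (∀ u v, ρ u v → θ u v) → (∀ u v, σ u v → θ u v) → θ x y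

private lemma congJoin_isCongruence {A : Type*} (m : A → A → A) (d : A → A → A → A)
    (ρ σ : A → A → Prop) : IsCongruence m d (congJoin m d ρ σ) where
  equiv := ⟨fun x ψ hψ _ _ => hψ.equiv.refl x,
    fun hxy ψ hψ h1 h2 => hψ.equiv.symm (hxy ψ hψ h1 h2),
    fun hxy hyz ψ hψ h1 h2 => hψ.equiv.trans (hxy ψ hψ h1 h2) (hyz ψ hψ h1 h2)⟩
  compat_m := fun ha hb ψ hψ h1 h2 => hψ.compat_m (ha ψ hψ h1 h2) (hb ψ hψ h1 h2)
  compat_d := fun ha hb hc ψ hψ h1 h2 =>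
    hψ.compat_d (ha ψ hψ h1 h2) (hb ψ hψ h1 h2) (hc ψ hψ h1 h2)

/-- The relation `θ ∘ r ∘ θ` is a congruence whenever `(A; m, d)` is an SMB
algebra over `r` and `θ` is a congruence. -/
private lemma smb_S_cong {A : Type*} {m : A → A → A} {d : A → A → A → A}
    {r θ : A → A → Prop} (h : IsSMB m d r) (hθ : IsCongruence m d θ) :
    IsCongruence m d (fun x y => ∃ x' y', θ x x' ∧ r x' y' ∧ θ y' y) where
  equiv := by
    constructor
    · intro x
      exact ⟨x, x, hθ.equiv.refl x, h.cong.equiv.refl x, hθ.equiv.refl x⟩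
    · rintro x y ⟨x', y', h1, h2, h3⟩
      exact ⟨y', x', hθ.equiv.symm h3, h.cong.equiv.symm h2, hθ.equiv.symm h1⟩
    · rintro a b c ⟨a1, b1, h1, h2, h3⟩ ⟨b2, c2, h4, h5, h6⟩
      have hb12 : θ b1 b2 := hθ.equiv.trans h3 h4
      have hq : θ a1 (m b2 a1) := by
        have := hθ.compat_m hb12 (hθ.equiv.refl a1)
        rwa [h.proj b1 a1 (h.cong.equiv.symm h2)] at this
      have hw : θ (m b1 c2) c2 := by
        have := hθ.compat_m hb12 (hθ.equiv.refl c2)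
        rwa [h.proj b2 c2 h5] at this
      have hr1 : r (m b2 a1) (m b2 b1) := h.cong.compat_m (h.cong.equiv.refl b2) h2
      have hr2 : r (m b2 b1) (m b1 b2) := h.comm b2 b1
      have hr3 : r (m b1 b2) (m b1 c2) := h.cong.compat_m (h.cong.equiv.refl b1) h5
      exact ⟨m b2 a1, m b1 c2, hθ.equiv.trans h1 hq,
        h.cong.equiv.trans (h.cong.equiv.trans hr1 hr2) hr3, hθ.equiv.trans hw h6⟩
  compat_m := by
    rintro a a' b b' ⟨x, x', h1, h2, h3⟩ ⟨y, y', h4, h5, h6⟩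
    exact ⟨m x y, m x' y', hθ.compat_m h1 h4, h.cong.compat_m h2 h5, hθ.compat_m h3 h6⟩
  compat_d := by
    rintro a a' b b' c c' ⟨x, x', h1, h2, h3⟩ ⟨y, y', h4, h5, h6⟩ ⟨z, z', h7, h8, h9⟩
    exact ⟨d x y z, d x' y' z', hθ.compat_d h1 h4 h7, h.cong.compat_d h2 h5 h8,
      hθ.compat_d h3 h6 h9⟩

/-- Key lemma: any pair in the join `r ∨ θ` satisfies the projection and
Mal'cev conditions modulo `θ`. -/
private lemma smb_join_key {A : Type*} {m : A → A → A} {d : A → A → A → A}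
    {r θ : A → A → Prop} (h : IsSMB m d r) (hθ : IsCongruence m d θ) {x y : A}
    (hxy : congJoin m d r θ x y) :
    θ (m x y) y ∧ θ (d x y y) x ∧ θ (d y y x) x := by
  obtain ⟨x', y', h1, h2, h3⟩ := hxy _ (smb_S_cong h hθ)
    (fun u v huv => ⟨u, v, hθ.equiv.refl u, huv, hθ.equiv.refl v⟩)
    (fun u v huv => ⟨u, u, hθ.equiv.refl u, h.cong.equiv.refl u, huv⟩)
  refine ⟨?_, ?_, ?_⟩
  · have := hθ.compat_m h1 (hθ.equiv.symm h3)
    rw [h.proj x' y' h2] at this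
    exact hθ.equiv.trans this h3
  · have := hθ.compat_d h1 (hθ.equiv.symm h3) (hθ.equiv.symm h3)
    rw [h.mal_left x' y' h2] at this
    exact hθ.equiv.trans this (hθ.equiv.symm h1)
  · have := hθ.compat_d (hθ.equiv.symm h3) (hθ.equiv.symm h3) h1
    rw [h.mal_right x' y' h2] at this
    exact hθ.equiv.trans this (hθ.equiv.symm h1)

/-- If `(A; m, d)` is an SMB algebra over `~` and `θ` is any congruence of
`(A; m, d)`, then the quotient algebra `A/θ` (with the induced operations) is
an SMB algebra over the relation `(~∨θ)/θ = {([x]_θ, [y]_θ) : (x,y) ∈ ~∨θ}`.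
Hence the class of SMB algebras is closed under homomorphic images. -/
theorem smb_quotient {A : Type*} (m : A → A → A) (d : A → A → A → A)
    (r θ : A → A → Prop) (h : IsSMB m d r) (hθ : IsCongruence m d θ)
    (mq : Quotient (Setoid.mk θ hθ.equiv) → Quotient (Setoid.mk θ hθ.equiv) →
      Quotient (Setoid.mk θ hθ.equiv))
    (dq : Quotient (Setoid.mk θ hθ.equiv) → Quotient (Setoid.mk θ hθ.equiv) →
      Quotient (Setoid.mk θ hθ.equiv) → Quotient (Setoid.mk θ hθ.equiv))
    (hmq : ∀ x y : A, mq (Quotient.mk _ x) (Quotient.mk _ y) = Quotient.mk _ (m x y))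
    (hdq : ∀ x y z : A, dq (Quotient.mk _ x) (Quotient.mk _ y) (Quotient.mk _ z) =
      Quotient.mk _ (d x y z)) :
    IsSMB mq dq (fun u v => ∃ x y : A, congJoin m d r θ x y ∧
      u = Quotient.mk _ x ∧ v = Quotient.mk _ y) := by
  have Jc := congJoin_isCongruence m d r θ
  have hrJ : ∀ u v, r u v → congJoin m d r θ u v := fun u v huv ψ _ hr _ => hr u v huv
  have hθJ : ∀ u v, θ u v → congJoin m d r θ u v := fun u v huv ψ _ _ hth => hth u v huv
  refine
    { cong := { equiv := ⟨?_, ?_, ?_⟩, compat_m := ?_, compat_d := ?_ }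
      idem_m := ?_, idem_d := ?_, comm := ?_, assoc := ?_, proj := ?_
      mal_left := ?_, mal_right := ?_ }
  · intro u
    obtain ⟨x, rfl⟩ := Quotient.exists_rep u
    exact ⟨x, x, Jc.equiv.refl x, rfl, rfl⟩
  · rintro u v ⟨x, y, hxy, rfl, rfl⟩
    exact ⟨y, x, Jc.equiv.symm hxy, rfl, rfl⟩
  · rintro u v w ⟨x, y, hxy, rfl, rfl⟩ ⟨y', z, hyz, hv, rfl⟩
    exact ⟨x, z, Jc.equiv.trans (Jc.equiv.trans hxy (hθJ y y' (Quotient.exact hv))) hyz,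
      rfl, rfl⟩
  · rintro u u' v v' ⟨x, x', hx, rfl, rfl⟩ ⟨y, y', hy, rfl, rfl⟩
    exact ⟨m x y, m x' y', Jc.compat_m hx hy, hmq x y, hmq x' y'⟩
  · rintro u u' v v' w w' ⟨x, x', hx, rfl, rfl⟩ ⟨y, y', hy, rfl, rfl⟩ ⟨z, z', hz, rfl, rfl⟩
    exact ⟨d x y z, d x' y' z', Jc.compat_d hx hy hz, hdq x y z, hdq x' y' z'⟩
  · intro u
    obtain ⟨x, rfl⟩ := Quotient.exists_rep u
    rw [hmq, h.idem_m]
  · intro u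
    obtain ⟨x, rfl⟩ := Quotient.exists_rep u
    rw [hdq, h.idem_d]
  · intro u v
    obtain ⟨x, rfl⟩ := Quotient.exists_rep u
    obtain ⟨y, rfl⟩ := Quotient.exists_rep v
    exact ⟨m x y, m y x, hrJ _ _ (h.comm x y), hmq x y, hmq y x⟩
  · intro u v w
    obtain ⟨x, rfl⟩ := Quotient.exists_rep u
    obtain ⟨y, rfl⟩ := Quotient.exists_rep v
    obtain ⟨z, rfl⟩ := Quotient.exists_rep w
    exact ⟨m (m x y) z, m x (m y z), hrJ _ _ (h.assoc x y z),
      by rw [hmq, hmq], by rw [hmq, hmq]⟩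
  · rintro u v ⟨x, y, hxy, rfl, rfl⟩
    rw [hmq]
    exact Quotient.sound (smb_join_key h hθ hxy).1
  · rintro u v ⟨x, y, hxy, rfl, rfl⟩
    rw [hdq]
    exact Quotient.sound (smb_join_key h hθ hxy).2.1
  · rintro u v ⟨x, y, hxy, rfl, rfl⟩
    rw [hdq]
    exact Quotient.sound (smb_join_key h hθ hxy).2.2
end

section
/- An algebra (A; ∧, d), with ∧ binary and d ternary, satisfies the twelve identities: x∧x = x; d(x,x,x) = x; (x∧y)∧(y∧x) = y∧x; (x∧(y∧z))∧((x∧y)∧z) = (x∧y)∧z; ((x∧y)∧z)∧(x∧(y∧z)) = x∧(y∧z); d(x∧y, y∧x, y∧x) = x∧y; d(y∧x, y∧x, x∧y) = x∧y; ((x∧y)∧z)∧d(x,y,z) = d(x,y,z); d(x,y,z)∧((x∧y)∧z) = (x∧y)∧z; x∧(x∧y) = x∧y; x∧(y∧x) = y∧x; d(x,y,z) = d((y∧z)∧x, (x∧z)∧y, (x∧y)∧z); and (x∧y)∧y = x∧y, if and only if there exists an equivalence relation ~ on A such that (A; ∧, d) is a regular SMB algebra over ~; moreover, in that case ~ is given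 by: x ~ y iff x∧y = y and y∧x = x. -/
/-! The relation `x ~ y :↔ x∧y = y ∧ y∧x = x` is an equivalence, compatible with `∧` in
each argument separately, by the absorption identities; compatibility with `d` is then free
because `d(x,y,z) ~ (x∧y)∧z`. Conversely, each identity is an instance of `∧` acting as second
projection or `d` as Mal'cev operation on a `~`-class, or of (R2) once both sides are shown
`~`-related. -/

def absorbEquiv {A : Type*} (m : A → A → A) (x y : A) : Prop :=
  m x y = y ∧ m y x = x

section

variable {A : Type*} {m : A → A → A}

theorem absorb_trans
    (hassoc : ∀ x y z, m (m x (m y z)) (m (m x y) z) = m (m x y) z)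
    (hright : ∀ x y, m (m x y) y = m x y)
    {x y z : A} (hxy : m x y = y) (hyz : m y z = z) : m x z = z := by
  simpa only [hxy, hyz, hright] using hassoc x y z

theorem absorb_mul_right
    (hassoc : ∀ x y z, m (m x (m y z)) (m (m x y) z) = m (m x y) z)
    (hassoc' : ∀ x y z, m (m (m x y) z) (m x (m y z)) = m x (m y z))
    (hleft : ∀ x y, m x (m y x) = m y x)
    (hright : ∀ x y, m (m x y) y = m x y)
    {a b : A} (c : A) (hab : m a b = b) :
    m (m a c) (m b c) = m b c := by
  have habc : m a (m b c) = m b c := by simpa only [hab, hright] using hassoc a b c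
  calc m (m a c) (m b c) = m (m (m a c) (m b c)) (m b c) := (hright _ _).symm
    _ = m (m (m a c) (m b c)) (m a (m c (m b c))) := by rw [hleft, habc]
    _ = m a (m c (m b c)) := hassoc' a c (m b c)
    _ = m b c := by rw [hleft, habc]

theorem absorb_mul_left
    (hassoc : ∀ x y z, m (m x (m y z)) (m (m x y) z) = m (m x y) z)
    (hassoc' : ∀ x y z, m (m (m x y) z) (m x (m y z)) = m x (m y z))
    (hleft : ∀ x y, m x (m y x) = m y x)
    (hright : ∀ x y, m (m x y) y = m x y)
    (a : A) {b p : A} (hbp : m b p = p) :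
    m (m a b) (m a p) = m a p := by
  have habp : m (m (m a b) p) (m a p) = m a p := by simpa only [hbp] using hassoc' a b p
  calc m (m a b) (m a p)
        = m (m (m a b) (m p (m a p))) (m (m (m a b) p) (m a p)) := by rw [hleft, habp, hright]
    _ = m (m (m a b) p) (m a p) := hassoc (m a b) p (m a p)
    _ = m a p := habp

theorem equivalence_absorbEquiv
    (hidem : ∀ x, m x x = x)
    (hassoc : ∀ x y z, m (m x (m y z)) (m (m x y) z) = m (m x y) z)
    (hright : ∀ x y, m (m x y) y = m x y) :
    Equivalence (absorbEquiv m) where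
  refl x := ⟨hidem x, hidem x⟩
  symm h := ⟨h.2, h.1⟩
  trans hxy hyz :=
    ⟨absorb_trans hassoc hright hxy.1 hyz.1, absorb_trans hassoc hright hyz.2 hxy.2⟩

theorem absorbEquiv_mul
    (hidem : ∀ x, m x x = x)
    (hassoc : ∀ x y z, m (m x (m y z)) (m (m x y) z) = m (m x y) z)
    (hassoc' : ∀ x y z, m (m (m x y) z) (m x (m y z)) = m x (m y z))
    (hleft : ∀ x y, m x (m y x) = m y x)
    (hright : ∀ x y, m (m x y) y = m x y)
    {a a' b b' : A} (ha : absorbEquiv m a a') (hb : absorbEquiv m b b') :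
    absorbEquiv m (m a b) (m a' b') :=
  (equivalence_absorbEquiv hidem hassoc hright).trans
    ⟨absorb_mul_right hassoc hassoc' hleft hright b ha.1,
      absorb_mul_right hassoc hassoc' hleft hright b ha.2⟩
    ⟨absorb_mul_left hassoc hassoc' hleft hright a' hb.1,
      absorb_mul_left hassoc hassoc' hleft hright a' hb.2⟩

variable {d : A → A → A → A}

theorem isCongruence_absorbEquiv
    (hidem : ∀ x, m x x = x)
    (hassoc : ∀ x y z, m (m x (m y z)) (m (m x y) z) = m (m x y) z)
    (hassoc' : ∀ x y z, m (m (m x y) z) (m x (m y z)) = m x (m y z))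
    (hd : ∀ x y z, m (m (m x y) z) (d x y z) = d x y z)
    (hd' : ∀ x y z, m (d x y z) (m (m x y) z) = m (m x y) z)
    (hleft : ∀ x y, m x (m y x) = m y x)
    (hright : ∀ x y, m (m x y) y = m x y) :
    IsCongruence m d (absorbEquiv m) := by
  have E := equivalence_absorbEquiv hidem hassoc hright
  have hmul := @absorbEquiv_mul _ _ hidem hassoc hassoc' hleft hright
  have hdm : ∀ a b c, absorbEquiv m (d a b c) (m (m a b) c) := fun a b c =>
    ⟨hd' a b c, hd a b c⟩
  exact ⟨E, hmul, fun ha hb hc =>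
    E.trans (hdm _ _ _) (E.trans (hmul (hmul ha hb) hc) (E.symm (hdm _ _ _)))⟩

theorem isRegularSMB_absorbEquiv
    (hidem : ∀ x, m x x = x)
    (hidem_d : ∀ x, d x x x = x)
    (hcomm : ∀ x y, m (m x y) (m y x) = m y x)
    (hassoc : ∀ x y z, m (m x (m y z)) (m (m x y) z) = m (m x y) z)
    (hassoc' : ∀ x y z, m (m (m x y) z) (m x (m y z)) = m x (m y z))
    (hmal : ∀ x y, d (m x y) (m y x) (m y x) = m x y)
    (hmal' : ∀ x y, d (m y x) (m y x) (m x y) = m x y)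
    (hd : ∀ x y z, m (m (m x y) z) (d x y z) = d x y z)
    (hd' : ∀ x y z, m (d x y z) (m (m x y) z) = m (m x y) z)
    (hleft : ∀ x y, m x (m y x) = m y x)
    (hreg3 : ∀ x y z, d x y z = d (m (m y z) x) (m (m x z) y) (m (m x y) z))
    (hright : ∀ x y, m (m x y) y = m x y) :
    IsRegularSMB m d (absorbEquiv m) where
  smb :=
    { cong := isCongruence_absorbEquiv hidem hassoc hassoc' hd hd' hleft hright
      idem_m := hidem
      idem_d := hidem_d
      comm x y := ⟨hcomm x y, hcomm y x⟩
      assoc x y z := ⟨hassoc' x y z, hassoc x y z⟩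
      proj _ _ h := h.1
      mal_left a b h := by simpa only [h.1, h.2] using hmal b a
      mal_right a b h := by simpa only [h.1, h.2] using hmal' b a }
  reg1 a b c := ⟨hd' a b c, hd a b c⟩
  reg2 a b h := by simpa only [hright] using h.1
  reg3 := hreg3
  reg4 := hright

variable {r : A → A → Prop}

theorem IsRegularSMB.mul_mul_self_left (h : IsRegularSMB m d r) (x y : A) :
    m x (m x y) = m x y := by
  refine h.reg2 x (m x y) ?_
  simpa only [h.smb.idem_m] using h.smb.cong.equiv.symm (h.smb.assoc x x y)

theorem IsRegularSMB.mul_mul_self_right (h : IsRegularSMB m d r) (x y : A) :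
    m x (m y x) = m y x := by
  have E := h.smb.cong.equiv
  refine h.reg2 x (m y x) ?_
  have hswap : r (m x (m y x)) (m x (m x y)) := h.smb.cong.compat_m (E.refl x) (h.smb.comm y x)
  rw [h.mul_mul_self_left] at hswap
  exact E.trans hswap (h.smb.comm x y)

end

/-- An algebra `(A; ∧, d)` satisfies the listed identities iff it is a regular
SMB algebra over some equivalence relation `~`; moreover, in that case `~` is
given by `x ~ y ↔ x∧y = y ∧ y∧x = x`. -/
theorem regular_smb_equational_base {A : Type*} (m : A → A → A)
    (d : A → A → A → A) :
    ((∀ x, m x x = x) ∧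
     (∀ x, d x x x = x) ∧
     (∀ x y, m (m x y) (m y x) = m y x) ∧
     (∀ x y z, m (m x (m y z)) (m (m x y) z) = m (m x y) z) ∧
     (∀ x y z, m (m (m x y) z) (m x (m y z)) = m x (m y z)) ∧
     (∀ x y, d (m x y) (m y x) (m y x) = m x y) ∧
     (∀ x y, d (m y x) (m y x) (m x y) = m x y) ∧
     (∀ x y z, m (m (m x y) z) (d x y z) = d x y z) ∧
     (∀ x y z, m (d x y z) (m (m x y) z) = m (m x y) z) ∧
     (∀ x y, m x (m x y) = m x y) ∧
     (∀ x y, m x (m y x) = m y x) ∧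
     (∀ x y z, d x y z = d (m (m y z) x) (m (m x z) y) (m (m x y) z)) ∧
     (∀ x y, m (m x y) y = m x y)) ↔
    (∃ r : A → A → Prop, IsRegularSMB m d r ∧
      ∀ x y, r x y ↔ (m x y = y ∧ m y x = x)) := by
  constructor
  · rintro ⟨h1, h2, h3, h4, h5, h6, h7, h8, h9, -, h11, h12, h13⟩
    exact ⟨absorbEquiv m,
      isRegularSMB_absorbEquiv h1 h2 h3 h4 h5 h6 h7 h8 h9 h11 h12 h13, fun _ _ => Iff.rfl⟩
  · rintro ⟨r, h, -⟩
    have S := h.smb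
    exact ⟨S.idem_m, S.idem_d,
      fun x y => S.proj _ _ (S.comm x y),
      fun x y z => S.proj _ _ (S.cong.equiv.symm (S.assoc x y z)),
      fun x y z => S.proj _ _ (S.assoc x y z),
      fun x y => S.mal_left _ _ (S.comm x y),
      fun x y => S.mal_right _ _ (S.comm x y),
      fun x y z => S.proj _ _ (S.cong.equiv.symm (h.reg1 x y z)),
      fun x y z => S.proj _ _ (h.reg1 x y z),
      h.mul_mul_self_left, h.mul_mul_self_right, h.reg3, h.reg4⟩
end

section
/- Let (A; ∧, d) be a regular SMB algebra over ~ and let a,b ∈ A. Then Cg(a,b) = D_{a,b} ∘ D_{a,b} ∘ D_{a,b}, i.e. the principal congruence generated by (a,b) equals the threefold relational composition of D_{a,b} with itself. -/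
/-- `Dab m d a b` is the smallest subset of `A × A` containing `(a,b)`, `(b,a)`
and all diagonal pairs, closed under coordinatewise application of `m` and `d`. -/
inductive Dab {A : Type*} (m : A → A → A) (d : A → A → A → A) (a b : A) : A → A → Prop
  | base : Dab m d a b a b
  | base_symm : Dab m d a b b a
  | diag (c : A) : Dab m d a b c c
  | meet {x y u v : A} : Dab m d a b x y → Dab m d a b u v →
      Dab m d a b (m x u) (m y v)
  | malcev {x y u v s t : A} : Dab m d a b x y → Dab m d a b u v →
      Dab m d a b s t → Dab m d a b (d x u s) (d y v t)

section SMBAux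

variable {A : Type*} {m : A → A → A} {d : A → A → A → A} {r : A → A → Prop}

lemma dab_symm {a b x y : A} (hxy : Dab m d a b x y) : Dab m d a b y x := by
  induction hxy with
  | base => exact Dab.base_symm
  | base_symm => exact Dab.base
  | diag c => exact Dab.diag c
  | meet _ _ ih1 ih2 => exact Dab.meet ih1 ih2
  | malcev _ _ _ ih1 ih2 ih3 => exact Dab.malcev ih1 ih2 ih3

lemma smb_E1 (h : IsRegularSMB m d r) (x y : A) : d x y y = m y x := by
  have h3 := h.reg3 x y y
  rw [h.smb.idem_m y, h.reg4] at h3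
  rw [h3]
  exact h.smb.mal_left _ _ (h.smb.comm y x)

lemma smb_E2 (h : IsRegularSMB m d r) (x y : A) : d y y x = m y x := by
  have h3 := h.reg3 y y x
  rw [h.smb.idem_m y] at h3
  rw [h3]
  have hw : r (m y x) (m (m y x) y) := by
    have h1 : r (m (m y x) y) (m (m x y) y) :=
      h.smb.cong.compat_m (h.smb.comm y x) (h.smb.cong.equiv.refl y)
    rw [h.reg4] at h1
    exact h.smb.cong.equiv.symm (h.smb.cong.equiv.trans h1 (h.smb.comm x y))
  exact h.smb.mal_right _ _ hw

lemma block_trans (h : IsRegularSMB m d r) {a b p q s : A}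
    (hpq : r p q) (hqs : r q s)
    (h1 : Dab m d a b p q) (h2 : Dab m d a b q s) : Dab m d a b p s := by
  have hd := Dab.malcev h1 (Dab.diag q) h2
  rwa [h.smb.mal_left p q hpq, h.smb.mal_right s q (h.smb.cong.equiv.symm hqs)] at hd

/-- The quotient setoid of the congruence `r`. -/
def smbSetoid (h : IsRegularSMB m d r) : Setoid A := ⟨r, h.smb.cong.equiv⟩

def qmk (h : IsRegularSMB m d r) (x : A) : Quotient (smbSetoid h) :=
  Quotient.mk (smbSetoid h) x

def qm (h : IsRegularSMB m d r) (p q : Quotient (smbSetoid h)) : Quotient (smbSetoid h) :=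
  Quotient.lift₂ (fun x y => qmk h (m x y))
    (fun _ _ _ _ hx hy => Quotient.sound (h.smb.cong.compat_m hx hy)) p q

lemma qm_mk (h : IsRegularSMB m d r) (x y : A) :
    qm h (qmk h x) (qmk h y) = qmk h (m x y) := rfl

lemma q_exact (h : IsRegularSMB m d r) {u v : A} (e : qmk h u = qmk h v) : r u v :=
  Quotient.exact e

lemma qm_comm (h : IsRegularSMB m d r) (p q : Quotient (smbSetoid h)) :
    qm h p q = qm h q p :=
  Quotient.inductionOn₂ p q fun x y => Quotient.sound (h.smb.comm x y)

lemma qm_assoc (h : IsRegularSMB m d r) (p q s : Quotient (smbSetoid h)) :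
    qm h (qm h p q) s = qm h p (qm h q s) :=
  Quotient.inductionOn₃ p q s fun x y z => Quotient.sound (h.smb.assoc x y z)

lemma qm_idem (h : IsRegularSMB m d r) (p : Quotient (smbSetoid h)) :
    qm h p p = p :=
  Quotient.inductionOn p fun x => congrArg (qmk h) (h.smb.idem_m x)

lemma qm_left_comm (h : IsRegularSMB m d r) (p q s : Quotient (smbSetoid h)) :
    qm h p (qm h q s) = qm h q (qm h p s) := by
  rw [← qm_assoc, qm_comm h p q, qm_assoc]

lemma qm_sl (h : IsRegularSMB m d r) (p q : Quotient (smbSetoid h)) :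
    qm h p (qm h p q) = qm h p q := by
  rw [← qm_assoc, qm_idem]

lemma qd (h : IsRegularSMB m d r) (x u s : A) :
    qmk h (d x u s) = qm h (qm h (qmk h x) (qmk h u)) (qmk h s) :=
  Quotient.sound (h.reg1 x u s)

lemma absorb2 (h : IsRegularSMB m d r) {p q c : Quotient (smbSetoid h)}
    (hp : qm h p c = p) : qm h (qm h p q) c = qm h p q := by
  rw [qm_assoc, qm_comm h q c, ← qm_assoc, hp]

/-- every `Dab`-pair has the same "bottom" class `[x] ∧ [a] ∧ [b]`. -/
lemma dab_inv (h : IsRegularSMB m d r) {a b x y : A} (hd : Dab m d a b x y) :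
    qm h (qmk h x) (qm h (qmk h a) (qmk h b))
      = qm h (qmk h y) (qm h (qmk h a) (qmk h b)) := by
  induction hd with
  | base => simp only [qm_assoc, qm_comm, qm_left_comm, qm_idem, qm_sl]
  | base_symm => simp only [qm_assoc, qm_comm, qm_left_comm, qm_idem, qm_sl]
  | diag c => rfl
  | @meet x y u v _ _ ih1 ih2 =>
      rw [← qm_mk h x u, ← qm_mk h y v]
      have l1 : qm h (qm h (qmk h x) (qmk h u)) (qm h (qmk h a) (qmk h b))
          = qm h (qm h (qmk h x) (qm h (qmk h a) (qmk h b)))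
              (qm h (qmk h u) (qm h (qmk h a) (qmk h b))) := by
        simp only [qm_assoc, qm_comm, qm_left_comm, qm_idem, qm_sl]
      have l2 : qm h (qm h (qmk h y) (qmk h v)) (qm h (qmk h a) (qmk h b))
          = qm h (qm h (qmk h y) (qm h (qmk h a) (qmk h b)))
              (qm h (qmk h v) (qm h (qmk h a) (qmk h b))) := by
        simp only [qm_assoc, qm_comm, qm_left_comm, qm_idem, qm_sl]
      rw [l1, l2, ih1, ih2]
  | @malcev x y u v s t _ _ _ ih1 ih2 ih3 =>
      rw [qd h x u s, qd h y v t]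
      have l1 : qm h (qm h (qm h (qmk h x) (qmk h u)) (qmk h s)) (qm h (qmk h a) (qmk h b))
          = qm h (qm h (qmk h x) (qm h (qmk h a) (qmk h b)))
              (qm h (qm h (qmk h u) (qm h (qmk h a) (qmk h b)))
                (qm h (qmk h s) (qm h (qmk h a) (qmk h b)))) := by
        simp only [qm_assoc, qm_comm, qm_left_comm, qm_idem, qm_sl]
      have l2 : qm h (qm h (qm h (qmk h y) (qmk h v)) (qmk h t)) (qm h (qmk h a) (qmk h b))
          = qm h (qm h (qmk h y) (qm h (qmk h a) (qmk h b)))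
              (qm h (qm h (qmk h v) (qm h (qmk h a) (qmk h b)))
                (qm h (qmk h t) (qm h (qmk h a) (qmk h b)))) := by
        simp only [qm_assoc, qm_comm, qm_left_comm, qm_idem, qm_sl]
      rw [l1, l2, ih1, ih2, ih3]

/-- dichotomy: a `Dab`-pair is either trivial or its meet lies below `[a]∧[b]`. -/
lemma dab_dich (h : IsRegularSMB m d r) {a b x y : A} (hd : Dab m d a b x y) :
    x = y ∨ qm h (qm h (qmk h x) (qmk h y)) (qm h (qmk h a) (qmk h b))
      = qm h (qmk h x) (qmk h y) := by
  induction hd with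
  | base =>
      right
      exact qm_idem h _
  | base_symm =>
      right
      simp only [qm_assoc, qm_comm, qm_left_comm, qm_idem, qm_sl]
  | diag c => exact Or.inl rfl
  | @meet x y u v _ _ ih1 ih2 =>
      rcases ih1 with rfl | e1
      · rcases ih2 with rfl | e2
        · exact Or.inl rfl
        · right
          rw [← qm_mk h x u, ← qm_mk h x v]
          have hX : qm h (qm h (qmk h x) (qmk h u)) (qm h (qmk h x) (qmk h v))
              = qm h (qm h (qmk h u) (qmk h v)) (qmk h x) := by
            simp only [qm_assoc, qm_comm, qm_left_comm, qm_idem, qm_sl]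
          rw [hX]
          exact absorb2 h e2
      · right
        rw [← qm_mk h x u, ← qm_mk h y v]
        have hX : qm h (qm h (qmk h x) (qmk h u)) (qm h (qmk h y) (qmk h v))
            = qm h (qm h (qmk h x) (qmk h y)) (qm h (qmk h u) (qmk h v)) := by
          simp only [qm_assoc, qm_comm, qm_left_comm, qm_idem, qm_sl]
        rw [hX]
        exact absorb2 h e1
  | @malcev x y u v s t _ _ _ ih1 ih2 ih3 =>
      rcases ih1 with rfl | e1
      · rcases ih2 with rfl | e2
        · rcases ih3 with rfl | e3
          · exact Or.inl rfl
          · right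
            rw [qd h x u s, qd h x u t]
            have hX : qm h (qm h (qm h (qmk h x) (qmk h u)) (qmk h s))
                  (qm h (qm h (qmk h x) (qmk h u)) (qmk h t))
                = qm h (qm h (qmk h s) (qmk h t))
                    (qm h (qmk h x) (qmk h u)) := by
              simp only [qm_assoc, qm_comm, qm_left_comm, qm_idem, qm_sl]
            rw [hX]
            exact absorb2 h e3
        · right
          rw [qd h x u s, qd h x v t]
          have hX : qm h (qm h (qm h (qmk h x) (qmk h u)) (qmk h s))
                (qm h (qm h (qmk h x) (qmk h v)) (qmk h t))
              = qm h (qm h (qmk h u) (qmk h v))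
                  (qm h (qmk h x) (qm h (qmk h s) (qmk h t))) := by
            simp only [qm_assoc, qm_comm, qm_left_comm, qm_idem, qm_sl]
          rw [hX]
          exact absorb2 h e2
      · right
        rw [qd h x u s, qd h y v t]
        have hX : qm h (qm h (qm h (qmk h x) (qmk h u)) (qmk h s))
              (qm h (qm h (qmk h y) (qmk h v)) (qmk h t))
            = qm h (qm h (qmk h x) (qmk h y))
                (qm h (qm h (qmk h u) (qmk h v)) (qm h (qmk h s) (qmk h t))) := by
          simp only [qm_assoc, qm_comm, qm_left_comm, qm_idem, qm_sl]
        rw [hX]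
        exact absorb2 h e1

lemma low_eq (h : IsRegularSMB m d r) {P Q C : Quotient (smbSetoid h)}
    (B : qm h (qm h P Q) C = qm h P Q) (I : qm h P C = qm h Q C) :
    qm h P Q = qm h P C := by
  calc qm h P Q = qm h (qm h P Q) C := B.symm
    _ = qm h Q (qm h P C) := by
        simp only [qm_assoc, qm_comm, qm_left_comm, qm_idem, qm_sl]
    _ = qm h Q (qm h Q C) := by rw [I]
    _ = qm h Q C := qm_sl h _ _
    _ = qm h P C := I.symm


lemma dab_quad (h : IsRegularSMB m d r) {a b x0 x1 x2 x3 x4 : A}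
    (h01 : Dab m d a b x0 x1) (h12 : Dab m d a b x1 x2)
    (h23 : Dab m d a b x2 x3) (h34 : Dab m d a b x3 x4) :
    ∃ u v, Dab m d a b x0 u ∧ Dab m d a b u v ∧ Dab m d a b v x4 := by
  by_cases e0 : x0 = x1
  · subst e0; exact ⟨x2, x3, h12, h23, h34⟩
  by_cases e1 : x1 = x2
  · subst e1; exact ⟨x1, x3, h01, h23, h34⟩
  by_cases e2 : x2 = x3
  · subst e2; exact ⟨x1, x2, h01, h12, h34⟩
  by_cases e3 : x3 = x4
  · subst e3; exact ⟨x1, x2, h01, h12, h23⟩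
  -- all links nontrivial
  have B0' := (dab_dich h (dab_symm h01)).resolve_left (fun q => e0 q.symm)
  have B1 := (dab_dich h h12).resolve_left e1
  have B1' := (dab_dich h (dab_symm h12)).resolve_left (fun q => e1 q.symm)
  have B2 := (dab_dich h h23).resolve_left e2
  have B2' := (dab_dich h (dab_symm h23)).resolve_left (fun q => e2 q.symm)
  have B3 := (dab_dich h h34).resolve_left e3
  have I0 := dab_inv h h01
  have I1 := dab_inv h h12
  have I2 := dab_inv h h23
  have I3 := dab_inv h h34
  -- Dab facts for the bottom elements
  have dx0w0 : Dab m d a b x0 (m x1 x0) := by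
    have hd := Dab.meet h01 (Dab.diag x0)
    rwa [h.smb.idem_m x0] at hd
  have dw01 : Dab m d a b (m x1 x0) (m x1 x2) := by
    have hd := Dab.malcev h01 (Dab.diag x1) h12
    rwa [smb_E1 h x0 x1, smb_E2 h x2 x1] at hd
  have dw12 : Dab m d a b (m x1 x2) (m x2 x1) := Dab.meet h12 (dab_symm h12)
  have dw23 : Dab m d a b (m x2 x1) (m x2 x3) := by
    have hd := Dab.malcev h12 (Dab.diag x2) h23
    rwa [smb_E1 h x1 x2, smb_E2 h x3 x2] at hd
  have dw34 : Dab m d a b (m x2 x3) (m x3 x2) := Dab.meet h23 (dab_symm h23)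
  have dw45 : Dab m d a b (m x3 x2) (m x3 x4) := by
    have hd := Dab.malcev h23 (Dab.diag x3) h34
    rwa [smb_E1 h x2 x3, smb_E2 h x4 x3] at hd
  have dw5x4 : Dab m d a b (m x3 x4) x4 := by
    have hd := Dab.meet h34 (Dab.diag x4)
    rwa [h.smb.idem_m x4] at hd
  -- classes of the bottom elements
  have lw0 : qm h (qmk h x1) (qmk h x0)
      = qm h (qmk h x1) (qm h (qmk h a) (qmk h b)) := low_eq h B0' I0.symm
  have lw1 : qm h (qmk h x1) (qmk h x2)
      = qm h (qmk h x1) (qm h (qmk h a) (qmk h b)) := low_eq h B1 I1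
  have lw2 : qm h (qmk h x2) (qmk h x1)
      = qm h (qmk h x2) (qm h (qmk h a) (qmk h b)) := low_eq h B1' I1.symm
  have lw3 : qm h (qmk h x2) (qmk h x3)
      = qm h (qmk h x2) (qm h (qmk h a) (qmk h b)) := low_eq h B2 I2
  have lw4 : qm h (qmk h x3) (qmk h x2)
      = qm h (qmk h x3) (qm h (qmk h a) (qmk h b)) := low_eq h B2' I2.symm
  have lw5 : qm h (qmk h x3) (qmk h x4)
      = qm h (qmk h x3) (qm h (qmk h a) (qmk h b)) := low_eq h B3 I3
  -- r-facts between consecutive bottom elements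
  have r01 : r (m x1 x0) (m x1 x2) := q_exact h (lw0.trans lw1.symm)
  have r12 : r (m x1 x2) (m x2 x1) := q_exact h (lw1.trans (I1.trans lw2.symm))
  have r23 : r (m x2 x1) (m x2 x3) := q_exact h (lw2.trans lw3.symm)
  have r34 : r (m x2 x3) (m x3 x2) := q_exact h (lw3.trans (I2.trans lw4.symm))
  have r45 : r (m x3 x2) (m x3 x4) := q_exact h (lw4.trans lw5.symm)
  -- block compression
  have tr : ∀ {p q s : A}, r p q → r q s → r p s :=
    fun hpq hqs => h.smb.cong.equiv.trans hpq hqs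
  have b2 : Dab m d a b (m x1 x0) (m x2 x1) := block_trans h r01 r12 dw01 dw12
  have b3 : Dab m d a b (m x1 x0) (m x2 x3) :=
    block_trans h (tr r01 r12) r23 b2 dw23
  have b4 : Dab m d a b (m x1 x0) (m x3 x2) :=
    block_trans h (tr (tr r01 r12) r23) r34 b3 dw34
  have b5 : Dab m d a b (m x1 x0) (m x3 x4) :=
    block_trans h (tr (tr (tr r01 r12) r23) r34) r45 b4 dw45
  exact ⟨m x1 x0, m x3 x4, dx0w0, b5, dw5x4⟩

lemma dab_cg {a b x y : A} (hd : Dab m d a b x y) (θ : A → A → Prop)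
    (hθ : IsCongruence m d θ) (hab : θ a b) : θ x y := by
  induction hd with
  | base => exact hab
  | base_symm => exact hθ.equiv.symm hab
  | diag c => exact hθ.equiv.refl c
  | meet _ _ ih1 ih2 => exact hθ.compat_m ih1 ih2
  | malcev _ _ _ ih1 ih2 ih3 => exact hθ.compat_d ih1 ih2 ih3

end SMBAux

/-- In a regular SMB algebra, the principal congruence `Cg(a,b)` equals the
threefold relational composition `D_{a,b} ∘ D_{a,b} ∘ D_{a,b}`. -/
theorem regular_smb_cg_eq_triple_comp {A : Type*} (m : A → A → A)
    (d : A → A → A → A) (r : A → A → Prop) (h : IsRegularSMB m d r)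
    (a b : A) :
    ∀ x y : A, Cg m d a b x y ↔
      ∃ u v : A, Dab m d a b x u ∧ Dab m d a b u v ∧ Dab m d a b v y := by
  intro x y
  constructor
  · intro hcg
    refine hcg (fun p q => ∃ u v : A, Dab m d a b p u ∧ Dab m d a b u v ∧ Dab m d a b v q)
      ⟨⟨?_, ?_, ?_⟩, ?_, ?_⟩ ⟨b, b, Dab.base, Dab.diag b, Dab.diag b⟩
    · intro z; exact ⟨z, z, Dab.diag z, Dab.diag z, Dab.diag z⟩
    · rintro p q ⟨u, v, h1, h2, h3⟩
      exact ⟨v, u, dab_symm h3, dab_symm h2, dab_symm h1⟩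
    · rintro p q s ⟨u, v, h1, h2, h3⟩ ⟨u', v', g1, g2, g3⟩
      obtain ⟨s1, t1, k1, k2, k3⟩ := dab_quad h h3 g1 g2 g3
      obtain ⟨s2, t2, l1, l2, l3⟩ := dab_quad h h2 k1 k2 k3
      exact dab_quad h h1 l1 l2 l3
    · rintro p p' q q' ⟨u, v, h1, h2, h3⟩ ⟨w, z, g1, g2, g3⟩
      exact ⟨m u w, m v z, Dab.meet h1 g1, Dab.meet h2 g2, Dab.meet h3 g3⟩
    · rintro p p' q q' s s' ⟨u, v, h1, h2, h3⟩ ⟨w, z, g1, g2, g3⟩ ⟨w', z', k1, k2, k3⟩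
      exact ⟨d u w w', d v z z', Dab.malcev h1 g1 k1, Dab.malcev h2 g2 k2,
        Dab.malcev h3 g3 k3⟩
  · rintro ⟨u, v, h1, h2, h3⟩ θ hθ hab
    exact hθ.equiv.trans (dab_cg h1 θ hθ hab)
      (hθ.equiv.trans (dab_cg h2 θ hθ hab) (dab_cg h3 θ hθ hab))
end

section
/- Let (A; ∧, d) be a finite SMB algebra over ~. Define x∧₁y := (x∧y)∧y and d₁(x,y,z) := d((y∧₁z)∧₁x, (x∧₁z)∧₁y, (x∧₁y)∧₁z). Then define x∧'y to be the result of applying the map z ↦ z∧₁y to x exactly |A|! times (i.e. ((…((x∧₁y)∧₁y)…)∧₁y) with |A|! occurrences of ∧₁), and define d'(x,y,z) := d₁((y∧'z)∧'x, (x∧'z)∧'y, (x∧'y)∧'z). Then (A; ∧', d') is a regular SMB algebra over the same congruence ~, and d'(a,b,c) = d(a,b,c) whenever a ~ b and b ~ c. -/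
/-- The derived binary operation `x ∧₁ y := (x∧y)∧y`. -/
def smbMeet1 {A : Type*} (m : A → A → A) (x y : A) : A := m (m x y) y

/-- The derived ternary operation
`d₁(x,y,z) := d((y∧₁z)∧₁x, (x∧₁z)∧₁y, (x∧₁y)∧₁z)`. -/
def smbD1 {A : Type*} (m : A → A → A) (d : A → A → A → A) (x y z : A) : A :=
  d (smbMeet1 m (smbMeet1 m y z) x) (smbMeet1 m (smbMeet1 m x z) y)
    (smbMeet1 m (smbMeet1 m x y) z)

/-- The derived binary operation `x ∧' y`: apply `z ↦ z ∧₁ y` to `x`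
exactly `|A|!` times. -/
def smbMeet' {A : Type*} [Fintype A] (m : A → A → A) (x y : A) : A :=
  (fun z => smbMeet1 m z y)^[(Fintype.card A).factorial] x

/-- The derived ternary operation
`d'(x,y,z) := d₁((y∧'z)∧'x, (x∧'z)∧'y, (x∧'y)∧'z)`. -/
def smbD' {A : Type*} [Fintype A] (m : A → A → A) (d : A → A → A → A)
    (x y z : A) : A :=
  smbD1 m d (smbMeet' m (smbMeet' m y z) x) (smbMeet' m (smbMeet' m x z) y)
    (smbMeet' m (smbMeet' m x y) z)

/-!
On a `~`-class `∧` is the second projection, so once `x ∧ y ~ y` a single step of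
`z ↦ z ∧₁ y` sends `x` to the fixed point `y`. Hence `x ∧' y ~ x ∧ y` always, `x ∧' y = y` as
soon as `x ∧ y ~ y` (this is (R2), and makes `∧'` the second projection on classes), and `d'`
reduces to `d` on triples from one class. The three arguments `(y∧'z)∧'x`, `(x∧'z)∧'y`,
`(x∧'y)∧'z` of `d` in `d'(x,y,z)` lie in one class, which gives (R1) and (R3). For (R4):
`|A|!` is a multiple of every period of a self-map `f` of `A` and at least every preperiod,
so `f^[|A|!]` is idempotent.
-/

open Function Fintype

theorem Function.isPeriodicPt_factorial_card_iterate_factorial_card {α : Type*} [Fintype α]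
    (f : α → α) (x : α) : IsPeriodicPt f (card α).factorial (f^[(card α).factorial] x) := by
  obtain ⟨i, j, hne, heq⟩ :=
    Fintype.exists_ne_map_eq_of_card_lt (fun i : Fin (card α + 1) => f^[i] x) (by simp)
  wlog hlt : i < j generalizing i j
  · exact this j i hne.symm heq.symm (lt_of_le_of_ne (not_lt.1 hlt) hne.symm)
  have hij : (i : ℕ) < j := hlt
  have hj : (j : ℕ) ≤ card α := Nat.lt_succ_iff.1 j.isLt
  have hperiodic : IsPeriodicPt f (j - i) (f^[i] x) := by
    change f^[j - i] (f^[i] x) = f^[i] x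
    rw [← iterate_add_apply, Nat.sub_add_cancel hij.le]
    exact heq.symm
  have hdvd : (j : ℕ) - i ∣ (card α).factorial := Nat.dvd_factorial (by omega) (by omega)
  have hi : (i : ℕ) ≤ (card α).factorial :=
    (by omega : (i : ℕ) ≤ card α).trans (Nat.self_le_factorial _)
  have hx : f^[(card α).factorial] x = f^[(card α).factorial - i] (f^[i] x) := by
    rw [← iterate_add_apply, Nat.sub_add_cancel hi]
  rw [hx]
  exact (hperiodic.apply_iterate _).trans_dvd hdvd

namespace IsSMB

variable {A : Type*} {m : A → A → A} {d : A → A → A → A} {r : A → A → Prop}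

theorem rel_meet_meet_rotate (h : IsSMB m d r) (x y z : A) :
    r (m (m x y) z) (m (m y z) x) :=
  h.cong.equiv.trans (h.assoc x y z) (h.comm x (m y z))

theorem rel_meet_meet_swap (h : IsSMB m d r) (x y z : A) :
    r (m (m x y) z) (m (m y x) z) :=
  h.cong.compat_m (h.comm x y) (h.cong.equiv.refl z)

theorem rel_meet_of_rel (h : IsSMB m d r) {a b : A} (hab : r a b) : r (m a b) b :=
  (h.proj a b hab).symm ▸ h.cong.equiv.refl b

theorem smbMeet1_rel (h : IsSMB m d r) (x y : A) : r (smbMeet1 m x y) (m x y) := by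
  rw [smbMeet1]
  simpa only [h.idem_m] using h.assoc x y y

theorem smbMeet1_eq_right (h : IsSMB m d r) {a b : A} (hab : r (m a b) b) :
    smbMeet1 m a b = b :=
  h.proj _ _ hab

theorem rel_smbMeet1 (h : IsSMB m d r) {a a' b b' : A} (ha : r a a') (hb : r b b') :
    r (smbMeet1 m a b) (smbMeet1 m a' b') :=
  h.cong.compat_m (h.cong.compat_m ha hb) hb

theorem iterate_succ_smbMeet1_rel (h : IsSMB m d r) (x y : A) (k : ℕ) :
    r ((fun z => smbMeet1 m z y)^[k + 1] x) (m x y) := by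
  induction k with
  | zero => exact h.smbMeet1_rel x y
  | succ k ih =>
    rw [iterate_succ_apply']
    have e := h.cong.equiv
    exact e.trans (h.smbMeet1_rel _ y)
      (e.trans (h.cong.compat_m ih (e.refl y)) (h.smbMeet1_rel x y))

theorem smbMeet1_smbMeet1_eq_of_rel (h : IsSMB m d r) {a b c : A} (hab : r a b)
    (hbc : r b c) : smbMeet1 m (smbMeet1 m a b) c = c := by
  rw [h.smbMeet1_eq_right (h.rel_meet_of_rel hab), h.smbMeet1_eq_right (h.rel_meet_of_rel hbc)]

variable [Fintype A]

theorem smbMeet'_rel (h : IsSMB m d r) (x y : A) : r (smbMeet' m x y) (m x y) := by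
  rw [smbMeet', ← Nat.succ_pred_eq_of_pos (Nat.factorial_pos _)]
  exact h.iterate_succ_smbMeet1_rel x y _

theorem smbMeet'_eq_right (h : IsSMB m d r) {a b : A} (hab : r (m a b) b) :
    smbMeet' m a b = b := by
  have hb : smbMeet1 m b b = b := h.smbMeet1_eq_right (h.rel_meet_of_rel (h.cong.equiv.refl b))
  rw [smbMeet', ← Nat.succ_pred_eq_of_pos (Nat.factorial_pos _), iterate_succ_apply,
    h.smbMeet1_eq_right hab]
  exact iterate_fixed (f := fun z => smbMeet1 m z b) hb _

theorem smbMeet'_eq_right_of_rel (h : IsSMB m d r) {a b : A} (hab : r a b) :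
    smbMeet' m a b = b :=
  h.smbMeet'_eq_right (h.rel_meet_of_rel hab)

theorem rel_smbMeet' (h : IsSMB m d r) {a a' b b' : A} (ha : r a a') (hb : r b b') :
    r (smbMeet' m a b) (smbMeet' m a' b') := by
  suffices ∀ k, r ((fun z => smbMeet1 m z b)^[k] a) ((fun z => smbMeet1 m z b')^[k] a') from
    this _
  intro k
  induction k with
  | zero => exact ha
  | succ k ih =>
    rw [iterate_succ_apply', iterate_succ_apply']
    exact h.rel_smbMeet1 ih hb

theorem smbMeet'_smbMeet'_rel (h : IsSMB m d r) (x y z : A) :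
    r (smbMeet' m (smbMeet' m x y) z) (m (m x y) z) :=
  h.cong.equiv.trans (h.smbMeet'_rel _ z)
    (h.cong.compat_m (h.smbMeet'_rel x y) (h.cong.equiv.refl z))

theorem smbMeet'_triple_rel (h : IsSMB m d r) (x y z : A) :
    r (smbMeet' m (smbMeet' m y z) x) (smbMeet' m (smbMeet' m x y) z) ∧
    r (smbMeet' m (smbMeet' m x z) y) (smbMeet' m (smbMeet' m x y) z) := by
  have e := h.cong.equiv
  have hZ := e.symm (h.smbMeet'_smbMeet'_rel x y z)
  constructor
  · refine e.trans (h.smbMeet'_smbMeet'_rel y z x) (e.trans ?_ hZ)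
    exact e.trans (h.rel_meet_meet_rotate y z x) (h.rel_meet_meet_rotate z x y)
  · refine e.trans (h.smbMeet'_smbMeet'_rel x z y) (e.trans ?_ hZ)
    exact e.trans (h.rel_meet_meet_swap x z y) (h.rel_meet_meet_rotate z x y)

theorem smbD'_eq (h : IsSMB m d r) (x y z : A) :
    smbD' m d x y z =
      d (smbMeet' m (smbMeet' m y z) x) (smbMeet' m (smbMeet' m x z) y)
        (smbMeet' m (smbMeet' m x y) z) := by
  have e := h.cong.equiv
  obtain ⟨hXZ, hYZ⟩ := h.smbMeet'_triple_rel x y z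
  rw [smbD', smbD1, h.smbMeet1_smbMeet1_eq_of_rel hYZ (e.symm hXZ),
    h.smbMeet1_smbMeet1_eq_of_rel hXZ (e.symm hYZ),
    h.smbMeet1_smbMeet1_eq_of_rel (e.trans hXZ (e.symm hYZ)) hYZ]

theorem smbD'_eq_of_rel (h : IsSMB m d r) {a b c : A} (hab : r a b) (hbc : r b c) :
    smbD' m d a b c = d a b c := by
  have e := h.cong.equiv
  rw [h.smbD'_eq, h.smbMeet'_eq_right_of_rel hbc, h.smbMeet'_eq_right_of_rel (e.trans hab hbc),
    h.smbMeet'_eq_right_of_rel hab, h.smbMeet'_eq_right_of_rel (e.symm (e.trans hab hbc)),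
    h.smbMeet'_eq_right_of_rel (e.symm hbc), h.smbMeet'_eq_right_of_rel hbc]

theorem isCongruence_smbMeet'_smbD' (h : IsSMB m d r) :
    IsCongruence (smbMeet' m) (smbD' m d) r where
  equiv := h.cong.equiv
  compat_m := h.rel_smbMeet'
  compat_d {a a' b b' c c'} ha hb hc := by
    rw [h.smbD'_eq, h.smbD'_eq]
    exact h.cong.compat_d (h.rel_smbMeet' (h.rel_smbMeet' hb hc) ha)
      (h.rel_smbMeet' (h.rel_smbMeet' ha hc) hb) (h.rel_smbMeet' (h.rel_smbMeet' ha hb) hc)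

theorem isSMB_smbMeet'_smbD' (h : IsSMB m d r) : IsSMB (smbMeet' m) (smbD' m d) r where
  cong := h.isCongruence_smbMeet'_smbD'
  idem_m x := h.smbMeet'_eq_right_of_rel (h.cong.equiv.refl x)
  idem_d x := by
    rw [h.smbD'_eq_of_rel (h.cong.equiv.refl x) (h.cong.equiv.refl x), h.idem_d]
  comm x y := by
    have e := h.cong.equiv
    exact e.trans (h.smbMeet'_rel x y) (e.trans (h.comm x y) (e.symm (h.smbMeet'_rel y x)))
  assoc x y z := by
    have e := h.cong.equiv
    refine e.trans (h.smbMeet'_smbMeet'_rel x y z) (e.trans (h.assoc x y z) ?_)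
    exact e.symm
      (e.trans (h.smbMeet'_rel x _) (h.cong.compat_m (e.refl x) (h.smbMeet'_rel y z)))
  proj _ _ := h.smbMeet'_eq_right_of_rel
  mal_left a b hab := by
    rw [h.smbD'_eq_of_rel hab (h.cong.equiv.refl b), h.mal_left a b hab]
  mal_right a b hab := by
    rw [h.smbD'_eq_of_rel (h.cong.equiv.refl b) (h.cong.equiv.symm hab), h.mal_right a b hab]

theorem isRegularSMB_smbMeet'_smbD' (h : IsSMB m d r) :
    IsRegularSMB (smbMeet' m) (smbD' m d) r where
  smb := h.isSMB_smbMeet'_smbD'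
  reg1 a b c := by
    obtain ⟨hXZ, hYZ⟩ := h.smbMeet'_triple_rel a b c
    rw [h.smbD'_eq]
    simpa only [h.idem_d] using
      h.cong.compat_d hXZ hYZ (h.cong.equiv.refl (smbMeet' m (smbMeet' m a b) c))
  reg2 a b hab :=
    h.smbMeet'_eq_right (h.cong.equiv.trans (h.cong.equiv.symm (h.smbMeet'_rel a b)) hab)
  reg3 x y z := by
    obtain ⟨hXZ, hYZ⟩ := h.smbMeet'_triple_rel x y z
    rw [h.smbD'_eq_of_rel (h.cong.equiv.trans hXZ (h.cong.equiv.symm hYZ)) hYZ, h.smbD'_eq]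
  reg4 x y := (isPeriodicPt_factorial_card_iterate_factorial_card (fun z => smbMeet1 m z y) x).eq

end IsSMB

/-- For any finite SMB algebra `(A; ∧, d)` over `~`, the algebra `(A; ∧', d')`
is a regular SMB algebra over the same congruence `~`, and `d'` agrees with `d`
on triples lying in a single `~`-class. -/
theorem finite_smb_to_regular {A : Type*} [Fintype A] (m : A → A → A)
    (d : A → A → A → A) (r : A → A → Prop) (h : IsSMB m d r) :
    IsRegularSMB (smbMeet' m) (smbD' m d) r ∧
    (∀ a b c : A, r a b → r b c → smbD' m d a b c = d a b c) :=
  ⟨h.isRegularSMB_smbMeet'_smbD', fun _ _ _ => h.smbD'_eq_of_rel⟩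
end

section
/- Let (A; ∧, d) be an SMB algebra over ~ and let a,b,c,e ∈ A. The following are equivalent: (i) ([c]_~, [e]_~) belongs to the smallest congruence of the quotient algebra A/~ containing ([a]_~, [b]_~); (ii) (c,e) ∈ Cg(a,b) ∨ ~; (iii) there exist k ∈ ℕ, elements c = c_0, d_0, c_1, d_1, …, c_k, d_k = e of A with c_i ~ d_i for all 0 ≤ i ≤ k, and unary polynomials p_1, …, p_k of (A; ∧, d) such that {d_{i-1}, c_i} = {p_i(a), p_i(b)} for all 1 ≤ i ≤ k. -/
/-- The unary polynomials of `(A; m, d)`: the smallest set of self-maps of `A`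
containing the identity and all constants, closed under composition with the
basic operations `m` and `d`. -/
inductive UnaryPoly {A : Type*} (m : A → A → A) (d : A → A → A → A) : (A → A) → Prop
  | id : UnaryPoly m d (fun x => x)
  | const (c : A) : UnaryPoly m d (fun _ => c)
  | meet {p q : A → A} : UnaryPoly m d p → UnaryPoly m d q →
      UnaryPoly m d (fun x => m (p x) (q x))
  | malcev {p q s : A → A} : UnaryPoly m d p → UnaryPoly m d q → UnaryPoly m d s →
      UnaryPoly m d (fun x => d (p x) (q x) (s x))

/-
(i) ⇔ (ii) is the correspondence theorem for the quotient map `A → A/~`: congruences of `A/~`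
are the congruences of `A` above `~`, and `Cg([a],[b])` corresponds to the least one containing
`(a, b)`, namely `Cg(a,b) ∨ ~`.

(ii) ⇔ (iii) is Mal'cev's description of a join with a principal congruence: the
reflexive-transitive closure of "`u ~ v` or `{u, v} = {p(a), p(b)}` for a unary polynomial `p`"
is symmetric and closed under unary polynomials, hence a congruence, so it is `Cg(a,b) ∨ ~`.
Since `~` is reflexive and transitive, every path in this closure can be arranged to alternate
between `~`-steps and polynomial steps, which is a chain as in (iii).
-/

section Congruence

variable {A : Type*} {m : A → A → A} {d : A → A → A → A}

theorem Cg.isCongruence (a b : A) : IsCongruence m d (Cg m d a b) where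
  equiv := ⟨fun x _ hθ _ => hθ.equiv.refl x,
    fun hxy θ hθ hab => hθ.equiv.symm (hxy θ hθ hab),
    fun hxy hyz θ hθ hab => hθ.equiv.trans (hxy θ hθ hab) (hyz θ hθ hab)⟩
  compat_m := fun hx hy θ hθ hab => hθ.compat_m (hx θ hθ hab) (hy θ hθ hab)
  compat_d := fun hx hy hz θ hθ hab => hθ.compat_d (hx θ hθ hab) (hy θ hθ hab) (hz θ hθ hab)

theorem Cg.rel (a b : A) : Cg m d a b a b := fun _ _ hab => hab

theorem congJoin.isCongruence (ρ σ : A → A → Prop) : IsCongruence m d (congJoin m d ρ σ) where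
  equiv := ⟨fun x _ hθ _ _ => hθ.equiv.refl x,
    fun hxy θ hθ hρ hσ => hθ.equiv.symm (hxy θ hθ hρ hσ),
    fun hxy hyz θ hθ hρ hσ => hθ.equiv.trans (hxy θ hθ hρ hσ) (hyz θ hθ hρ hσ)⟩
  compat_m := fun hx hy θ hθ hρ hσ => hθ.compat_m (hx θ hθ hρ hσ) (hy θ hθ hρ hσ)
  compat_d := fun hx hy hz θ hθ hρ hσ =>
    hθ.compat_d (hx θ hθ hρ hσ) (hy θ hθ hρ hσ) (hz θ hθ hρ hσ)

theorem congJoin.of_left {ρ σ : A → A → Prop} {x y : A} (hxy : ρ x y) :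
    congJoin m d ρ σ x y := fun _ _ hρ _ => hρ _ _ hxy

theorem congJoin.of_right {ρ σ : A → A → Prop} {x y : A} (hxy : σ x y) :
    congJoin m d ρ σ x y := fun _ _ _ hσ => hσ _ _ hxy

theorem UnaryPoly.comp {p q : A → A} (hp : UnaryPoly m d p) (hq : UnaryPoly m d q) :
    UnaryPoly m d (fun x => p (q x)) := by
  induction hp with
  | id => exact hq
  | const c => exact .const c
  | meet _ _ ihp ihq => exact .meet ihp ihq
  | malcev _ _ _ ihp ihq ihs => exact .malcev ihp ihq ihs

theorem IsCongruence.map_unaryPoly {θ : A → A → Prop} (hθ : IsCongruence m d θ) {p : A → A}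
    (hp : UnaryPoly m d p) {x y : A} (hxy : θ x y) : θ (p x) (p y) := by
  induction hp with
  | id => exact hxy
  | const c => exact hθ.equiv.refl c
  | meet _ _ ihp ihq => exact hθ.compat_m ihp ihq
  | malcev _ _ _ ihp ihq ihs => exact hθ.compat_d ihp ihq ihs

-- Vary one argument of an operation at a time.
theorem IsCongruence.of_map_unaryPoly {θ : A → A → Prop} (hθ : Equivalence θ)
    (hpoly : ∀ p, UnaryPoly m d p → ∀ x y, θ x y → θ (p x) (p y)) : IsCongruence m d θ where
  equiv := hθ
  compat_m {_ x' y _} hx hy :=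
    hθ.trans (hpoly _ (.meet .id (.const y)) _ _ hx) (hpoly _ (.meet (.const x') .id) _ _ hy)
  compat_d {_ x' y y' z _} hx hy hz :=
    hθ.trans (hpoly _ (.malcev .id (.const y) (.const z)) _ _ hx) <|
      hθ.trans (hpoly _ (.malcev (.const x') .id (.const z)) _ _ hy)
        (hpoly _ (.malcev (.const x') (.const y') .id) _ _ hz)

theorem IsCongruence.rel_of_pair_eq {θ : A → A → Prop} (hθ : IsCongruence m d θ)
    {x y u v : A} (hxy : θ x y) (huv : ({u, v} : Set A) = {x, y}) : θ u v := by
  rcases Set.pair_eq_pair_iff.mp huv with ⟨rfl, rfl⟩ | ⟨rfl, rfl⟩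
  · exact hxy
  · exact hθ.equiv.symm hxy

end Congruence

section Correspondence

variable {A B : Type*} {m : A → A → A} {d : A → A → A → A}
  {mB : B → B → B} {dB : B → B → B → B} {f : A → B}

theorem IsCongruence.comap (hfm : ∀ x y, f (m x y) = mB (f x) (f y))
    (hfd : ∀ x y z, f (d x y z) = dB (f x) (f y) (f z)) {θ : B → B → Prop}
    (hθ : IsCongruence mB dB θ) : IsCongruence m d (fun x y => θ (f x) (f y)) where
  equiv := hθ.equiv.comap f
  compat_m hx hy := by simpa only [hfm] using hθ.compat_m hx hy
  compat_d hx hy hz := by simpa only [hfd] using hθ.compat_d hx hy hz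

theorem IsCongruence.exists_descend (hf : Function.Surjective f)
    (hfm : ∀ x y, f (m x y) = mB (f x) (f y))
    (hfd : ∀ x y z, f (d x y z) = dB (f x) (f y) (f z)) {θ : A → A → Prop}
    (hθ : IsCongruence m d θ) (hker : ∀ x y, f x = f y → θ x y) :
    ∃ θB : B → B → Prop, IsCongruence mB dB θB ∧ ∀ x y, θB (f x) (f y) ↔ θ x y := by
  set s := Function.surjInv hf
  have hs : ∀ u, f (s u) = u := Function.surjInv_eq hf
  have hsf : ∀ x, θ (s (f x)) x := fun x => hker _ _ (hs (f x))
  refine ⟨fun u v => θ (s u) (s v), ⟨hθ.equiv.comap s, fun hu hv => ?_, fun hu hv hw => ?_⟩,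
    fun x y => ⟨fun hxy => ?_, fun hxy => ?_⟩⟩
  · refine hθ.equiv.trans (hker _ _ ?_) <| hθ.equiv.trans (hθ.compat_m hu hv) (hker _ _ ?_)
    all_goals simp only [hfm, hs]
  · refine hθ.equiv.trans (hker _ _ ?_) <| hθ.equiv.trans (hθ.compat_d hu hv hw) (hker _ _ ?_)
    all_goals simp only [hfd, hs]
  · exact hθ.equiv.trans (hθ.equiv.symm (hsf x)) (hθ.equiv.trans hxy (hsf y))
  · exact hθ.equiv.trans (hsf x) (hθ.equiv.trans hxy (hθ.equiv.symm (hsf y)))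

theorem cg_map_iff_congJoin_ker (hf : Function.Surjective f)
    (hfm : ∀ x y, f (m x y) = mB (f x) (f y))
    (hfd : ∀ x y z, f (d x y z) = dB (f x) (f y) (f z)) {r : A → A → Prop}
    (hker : ∀ x y, f x = f y ↔ r x y) (a b c e : A) :
    Cg mB dB (f a) (f b) (f c) (f e) ↔ congJoin m d (Cg m d a b) r c e := by
  constructor
  · intro hce
    obtain ⟨θB, hθB, hθB_iff⟩ := (congJoin.isCongruence (Cg m d a b) r).exists_descend hf hfm hfd
      fun x y hxy => congJoin.of_right ((hker x y).mp hxy)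
    exact (hθB_iff c e).mp <| hce θB hθB <| (hθB_iff a b).mpr (congJoin.of_left (Cg.rel a b))
  · intro hce
    have hpull := (Cg.isCongruence (m := mB) (d := dB) (f a) (f b)).comap hfm hfd
    refine hce _ hpull (fun x y hxy => hxy _ hpull (Cg.rel _ _)) fun x y hxy => ?_
    rw [(hker x y).mpr hxy]
    exact hpull.equiv.refl y

end Correspondence

section MalcevChain

variable {A : Type*} {m : A → A → A} {d : A → A → A → A} {r : A → A → Prop} {a b : A}

def PolyStep (m : A → A → A) (d : A → A → A → A) (r : A → A → Prop) (a b : A) :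
    A → A → Prop :=
  fun u v => r u v ∨ ∃ p : A → A, UnaryPoly m d p ∧ ({u, v} : Set A) = {p a, p b}

def MalcevChain (m : A → A → A) (d : A → A → A → A) (r : A → A → Prop) (a b c e : A) : Prop :=
  ∃ (k : ℕ) (cs ds : ℕ → A) (p : ℕ → A → A),
    cs 0 = c ∧ ds k = e ∧
    (∀ i, i ≤ k → r (cs i) (ds i)) ∧
    (∀ i, 1 ≤ i → i ≤ k → UnaryPoly m d (p i) ∧
      ({ds (i - 1), cs i} : Set A) = {p i a, p i b})

theorem PolyStep.symm (hr : Equivalence r) {u v : A} :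
    PolyStep m d r a b u v → PolyStep m d r a b v u
  | .inl huv => .inl (hr.symm huv)
  | .inr ⟨p, hp, huv⟩ => .inr ⟨p, hp, Set.pair_comm v u ▸ huv⟩

theorem PolyStep.map_unaryPoly (hr : IsCongruence m d r) {q : A → A} (hq : UnaryPoly m d q)
    {u v : A} : PolyStep m d r a b u v → PolyStep m d r a b (q u) (q v)
  | .inl huv => .inl (hr.map_unaryPoly hq huv)
  | .inr ⟨p, hp, huv⟩ => .inr ⟨fun x => q (p x), hq.comp hp, by
      rw [← Set.image_pair, huv, Set.image_pair]⟩

theorem reflTransGen_polyStep_isCongruence (hr : IsCongruence m d r) :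
    IsCongruence m d (Relation.ReflTransGen (PolyStep m d r a b)) := by
  refine .of_map_unaryPoly ⟨fun _ => .refl, fun hxy => ?_, .trans⟩ fun q hq x y hxy =>
    Relation.ReflTransGen.lift q (fun _ _ => PolyStep.map_unaryPoly hr hq) x y hxy
  exact Relation.ReflTransGen.mono (fun _ _ => PolyStep.symm hr.equiv) _ _
    (Relation.reflTransGen_swap.mpr hxy)

theorem congJoin_cg_iff_reflTransGen_polyStep (hr : IsCongruence m d r) {x y : A} :
    congJoin m d (Cg m d a b) r x y ↔ Relation.ReflTransGen (PolyStep m d r a b) x y := by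
  have hE := reflTransGen_polyStep_isCongruence (a := a) (b := b) hr
  have hJ := congJoin.isCongruence (m := m) (d := d) (Cg m d a b) r
  refine ⟨fun hxy => ?_, Relation.reflTransGen_le_of_equivalence_of_le hJ.equiv ?_ x y⟩
  · exact hxy _ hE (fun u v huv => huv _ hE (.single (.inr ⟨id, .id, rfl⟩)))
      fun u v huv => .single (.inl huv)
  rintro u v (huv | ⟨p, hp, huv⟩)
  · exact congJoin.of_right huv
  · exact hJ.rel_of_pair_eq (hJ.map_unaryPoly hp (congJoin.of_left (Cg.rel a b))) huv

theorem MalcevChain.refl (hr : ∀ x, r x x) (x : A) : MalcevChain m d r a b x x :=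
  ⟨0, fun _ => x, fun _ => x, fun _ => id, rfl, rfl, fun _ _ => hr x, fun _ _ _ => by omega⟩

theorem MalcevChain.snoc {x y u v : A} (hxy : MalcevChain m d r a b x y) {q : A → A}
    (hq : UnaryPoly m d q) (hyu : ({y, u} : Set A) = {q a, q b}) (huv : r u v) :
    MalcevChain m d r a b x v := by
  obtain ⟨k, cs, ds, p, hcs, hds, hr, hp⟩ := hxy
  refine ⟨k + 1, fun i => if i ≤ k then cs i else u, fun i => if i ≤ k then ds i else v,
    fun i => if i ≤ k then p i else q, by simp [hcs], by simp, fun i hi => ?_, fun i hi hik => ?_⟩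
  · by_cases hik : i ≤ k
    · simpa [hik] using hr i hik
    · simpa [hik] using huv
  · by_cases hik' : i ≤ k
    · simpa [hik', show i - 1 ≤ k by omega] using hp i hi hik'
    · obtain rfl : i = k + 1 := by omega
      simpa [hds] using ⟨hq, hyu⟩

theorem MalcevChain.of_reflTransGen (hr : ∀ x, r x x) {x y : A}
    (hxy : Relation.ReflTransGen (PolyStep m d r a b) x y) : MalcevChain m d r a b x y := by
  induction hxy with
  | refl => exact .refl hr x
  | @tail u v _ huv ih =>
    rcases huv with huv | ⟨q, hq, huv⟩
    · exact ih.snoc (.const u) rfl huv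
    · exact ih.snoc hq huv (hr v)

theorem MalcevChain.reflTransGen {x y : A} (hxy : MalcevChain m d r a b x y) :
    Relation.ReflTransGen (PolyStep m d r a b) x y := by
  obtain ⟨k, cs, ds, p, rfl, rfl, hr, hp⟩ := hxy
  suffices ∀ j ≤ k, Relation.ReflTransGen (PolyStep m d r a b) (cs 0) (ds j) from this k le_rfl
  intro j hj
  induction j with
  | zero => exact .single (.inl (hr 0 hj))
  | succ j ih =>
    obtain ⟨hpj, hset⟩ := hp (j + 1) (by omega) hj
    exact ((ih (by omega)).tail (.inr ⟨_, hpj, hset⟩)).tail (.inl (hr (j + 1) hj))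

end MalcevChain

/-- In an SMB algebra over `~`, the following are equivalent:
(i) `([c]_~, [e]_~)` lies in the principal congruence of the quotient algebra
`A/~` generated by `([a]_~, [b]_~)`; (ii) `(c,e) ∈ Cg(a,b) ∨ ~`;
(iii) there is a Mal'cev chain `c = c₀, d₀, c₁, d₁, …, c_k, d_k = e` with
`cᵢ ~ dᵢ` and unary polynomials `pᵢ` with `{dᵢ₋₁, cᵢ} = {pᵢ(a), pᵢ(b)}`. -/
theorem smb_cg_join_tfae {A : Type*} (m : A → A → A) (d : A → A → A → A)
    (r : A → A → Prop) (h : IsSMB m d r) (a b c e : A)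
    (mq : Quotient (Setoid.mk r h.cong.equiv) → Quotient (Setoid.mk r h.cong.equiv) →
      Quotient (Setoid.mk r h.cong.equiv))
    (dq : Quotient (Setoid.mk r h.cong.equiv) → Quotient (Setoid.mk r h.cong.equiv) →
      Quotient (Setoid.mk r h.cong.equiv) → Quotient (Setoid.mk r h.cong.equiv))
    (hmq : ∀ x y : A, mq (Quotient.mk _ x) (Quotient.mk _ y) = Quotient.mk _ (m x y))
    (hdq : ∀ x y z : A, dq (Quotient.mk _ x) (Quotient.mk _ y) (Quotient.mk _ z) =
      Quotient.mk _ (d x y z)) :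
    (Cg mq dq (Quotient.mk _ a) (Quotient.mk _ b) (Quotient.mk _ c) (Quotient.mk _ e)
      ↔ congJoin m d (Cg m d a b) r c e) ∧
    (congJoin m d (Cg m d a b) r c e ↔
      ∃ (k : ℕ) (cs ds : ℕ → A) (p : ℕ → A → A),
        cs 0 = c ∧ ds k = e ∧
        (∀ i, i ≤ k → r (cs i) (ds i)) ∧
        (∀ i, 1 ≤ i → i ≤ k → UnaryPoly m d (p i) ∧
          ({ds (i - 1), cs i} : Set A) = {p i a, p i b})) :=
  ⟨cg_map_iff_congJoin_ker Quotient.mk_surjective (fun x y => (hmq x y).symm)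
      (fun x y z => (hdq x y z).symm) (fun _ _ => Quotient.eq) a b c e,
    (congJoin_cg_iff_reflTransGen_polyStep h.cong).trans
      ⟨MalcevChain.of_reflTransGen h.cong.equiv.refl, MalcevChain.reflTransGen⟩⟩
end

section
/- Let (A; ∧, d) be a regular SMB algebra over ~ and let a,b,c,e ∈ A. Then Cg(a,b) ∩ Cg(c,e) ⊆ ~ if and only if the intersection of the smallest congruence of the quotient algebra A/~ containing ([a]_~,[b]_~) with the smallest congruence of A/~ containing ([c]_~,[e]_~) is the equality relation on A/~. -/
section SMBProof

variable {A : Type*}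

theorem cg_isCongruence (m : A → A → A) (d : A → A → A → A) (a b : A) :
    IsCongruence m d (Cg m d a b) := by
  refine ⟨⟨?_, ?_, ?_⟩, ?_, ?_⟩
  · intro x θ hθ _; exact hθ.equiv.refl x
  · intro x y hxy θ hθ hab; exact hθ.equiv.symm (hxy θ hθ hab)
  · intro x y z h1 h2 θ hθ hab; exact hθ.equiv.trans (h1 θ hθ hab) (h2 θ hθ hab)
  · intro a1 a2 b1 b2 h1 h2 θ hθ hab; exact hθ.compat_m (h1 θ hθ hab) (h2 θ hθ hab)
  · intro a1 a2 b1 b2 c1 c2 h1 h2 h3 θ hθ hab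
    exact hθ.compat_d (h1 θ hθ hab) (h2 θ hθ hab) (h3 θ hθ hab)

theorem cg_self (m : A → A → A) (d : A → A → A → A) (a b : A) : Cg m d a b a b :=
  fun _ _ hab => hab

/-- Equivalence generated by the union of two relations (chains). -/
inductive EGen (θ r : A → A → Prop) : A → A → Prop
  | base : ∀ {x y}, θ x y → EGen θ r x y
  | baser : ∀ {x y}, r x y → EGen θ r x y
  | refl : ∀ x, EGen θ r x x
  | symm : ∀ {x y}, EGen θ r x y → EGen θ r y x
  | trans : ∀ {x y z}, EGen θ r x y → EGen θ r y z → EGen θ r x z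

theorem egen_m {m : A → A → A} {d : A → A → A → A} {θ r : A → A → Prop}
    (hθ : IsCongruence m d θ) (hr : IsCongruence m d r)
    {x x' y y' : A} (e1 : EGen θ r x x') (e2 : EGen θ r y y') :
    EGen θ r (m x y) (m x' y') := by
  have L : ∀ {p p'}, EGen θ r p p' → ∀ q, EGen θ r (m p q) (m p' q) := by
    intro p p' e
    induction e with
    | base hb => exact fun q => EGen.base (hθ.compat_m hb (hθ.equiv.refl q))
    | baser hb => exact fun q => EGen.baser (hr.compat_m hb (hr.equiv.refl q))
    | refl p => exact fun q => EGen.refl _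
    | symm _ ih => exact fun q => EGen.symm (ih q)
    | trans _ _ ih1 ih2 => exact fun q => EGen.trans (ih1 q) (ih2 q)
  have R : ∀ {q q'}, EGen θ r q q' → ∀ p, EGen θ r (m p q) (m p q') := by
    intro q q' e
    induction e with
    | base hb => exact fun p => EGen.base (hθ.compat_m (hθ.equiv.refl p) hb)
    | baser hb => exact fun p => EGen.baser (hr.compat_m (hr.equiv.refl p) hb)
    | refl q => exact fun p => EGen.refl _
    | symm _ ih => exact fun p => EGen.symm (ih p)
    | trans _ _ ih1 ih2 => exact fun p => EGen.trans (ih1 p) (ih2 p)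
  exact EGen.trans (L e1 y) (R e2 x')

theorem egen_d {m : A → A → A} {d : A → A → A → A} {θ r : A → A → Prop}
    (hθ : IsCongruence m d θ) (hr : IsCongruence m d r)
    {x x' y y' z z' : A} (e1 : EGen θ r x x') (e2 : EGen θ r y y')
    (e3 : EGen θ r z z') : EGen θ r (d x y z) (d x' y' z') := by
  have L : ∀ {p p'}, EGen θ r p p' → ∀ q w, EGen θ r (d p q w) (d p' q w) := by
    intro p p' e
    induction e with
    | base hb => exact fun q w => EGen.base (hθ.compat_d hb (hθ.equiv.refl q) (hθ.equiv.refl w))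
    | baser hb => exact fun q w => EGen.baser (hr.compat_d hb (hr.equiv.refl q) (hr.equiv.refl w))
    | refl p => exact fun q w => EGen.refl _
    | symm _ ih => exact fun q w => EGen.symm (ih q w)
    | trans _ _ ih1 ih2 => exact fun q w => EGen.trans (ih1 q w) (ih2 q w)
  have M : ∀ {q q'}, EGen θ r q q' → ∀ p w, EGen θ r (d p q w) (d p q' w) := by
    intro q q' e
    induction e with
    | base hb => exact fun p w => EGen.base (hθ.compat_d (hθ.equiv.refl p) hb (hθ.equiv.refl w))
    | baser hb => exact fun p w => EGen.baser (hr.compat_d (hr.equiv.refl p) hb (hr.equiv.refl w))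
    | refl q => exact fun p w => EGen.refl _
    | symm _ ih => exact fun p w => EGen.symm (ih p w)
    | trans _ _ ih1 ih2 => exact fun p w => EGen.trans (ih1 p w) (ih2 p w)
  have R : ∀ {w w'}, EGen θ r w w' → ∀ p q, EGen θ r (d p q w) (d p q w') := by
    intro w w' e
    induction e with
    | base hb => exact fun p q => EGen.base (hθ.compat_d (hθ.equiv.refl p) (hθ.equiv.refl q) hb)
    | baser hb => exact fun p q => EGen.baser (hr.compat_d (hr.equiv.refl p) (hr.equiv.refl q) hb)
    | refl w => exact fun p q => EGen.refl _
    | symm _ ih => exact fun p q => EGen.symm (ih p q)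
    | trans _ _ ih1 ih2 => exact fun p q => EGen.trans (ih1 p q) (ih2 p q)
  exact EGen.trans (L e1 y z) (EGen.trans (M e2 x' z) (R e3 x' y'))

theorem fact1 {m : A → A → A} {d : A → A → A → A} {r : A → A → Prop}
    (h : IsRegularSMB m d r) (x y : A) : r (m y (m x y)) (m x y) := by
  have hr := h.smb.cong
  have a1 := h.smb.assoc y x y
  have c1 := hr.compat_m (h.smb.comm y x) (hr.equiv.refl y)
  rw [h.reg4 x y] at c1
  exact hr.equiv.trans (hr.equiv.symm a1) c1

theorem fact2 {m : A → A → A} {d : A → A → A → A} {r : A → A → Prop}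
    (h : IsRegularSMB m d r) {z u : A} (t : A) (hle : r (m z u) u) :
    r (m z (m u t)) (m u t) := by
  have hr := h.smb.cong
  have a1 := h.smb.assoc z u t
  have c1 := hr.compat_m hle (hr.equiv.refl t)
  exact hr.equiv.trans (hr.equiv.symm a1) c1

theorem fact3 {m : A → A → A} {d : A → A → A → A} {r : A → A → Prop}
    (h : IsRegularSMB m d r) (x y : A) : r (m x (m x y)) (m x y) := by
  have a1 := h.smb.assoc x x y
  rw [h.smb.idem_m x] at a1
  exact h.smb.cong.equiv.symm a1

/-- Chain compression: if `x (θ ∨ r) y` then `x` has a `θ`-partner whose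
`~`-class lies below that of `y`, and symmetrically. -/
theorem cp {m : A → A → A} {d : A → A → A → A} {r : A → A → Prop}
    (h : IsRegularSMB m d r) {θ : A → A → Prop} (hθ : IsCongruence m d θ)
    {x y : A} (e : EGen θ r x y) :
    (∃ t, θ x t ∧ r (m y t) t) ∧ (∃ t, θ y t ∧ r (m x t) t) := by
  have hr := h.smb.cong
  induction e with
  | @base p q hb =>
    constructor
    · refine ⟨m p q, ?_, fact1 h p q⟩
      have := hθ.compat_m (hθ.equiv.refl p) hb
      rwa [h.smb.idem_m p] at this
    · refine ⟨m q p, ?_, fact1 h q p⟩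
      have := hθ.compat_m (hθ.equiv.refl q) (hθ.equiv.symm hb)
      rwa [h.smb.idem_m q] at this
  | @baser p q hb =>
    constructor
    · refine ⟨p, hθ.equiv.refl p, ?_⟩
      have := hr.compat_m (hr.equiv.symm hb) (hr.equiv.refl p)
      rwa [h.smb.idem_m p] at this
    · refine ⟨q, hθ.equiv.refl q, ?_⟩
      have := hr.compat_m hb (hr.equiv.refl q)
      rwa [h.smb.idem_m q] at this
  | refl p =>
    refine ⟨⟨p, hθ.equiv.refl p, ?_⟩, ⟨p, hθ.equiv.refl p, ?_⟩⟩ <;>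
      · rw [h.smb.idem_m p]; exact hr.equiv.refl p
  | symm _ ih => exact ⟨ih.2, ih.1⟩
  | @trans p q w _ _ ih1 ih2 =>
    obtain ⟨⟨t, hxt, hty⟩, ⟨v, hyv, hvx⟩⟩ := ih1
    obtain ⟨⟨u, hyu, huz⟩, ⟨w', hzw, hwy⟩⟩ := ih2
    constructor
    · have e1 : m q t = t := h.reg2 q t hty
      have h1 : θ t (m u t) := by
        have := hθ.compat_m hyu (hθ.equiv.refl t); rwa [e1] at this
      exact ⟨m u t, hθ.equiv.trans hxt h1, fact2 h t huz⟩
    · have e1 : m q w' = w' := h.reg2 q w' hwy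
      have h1 : θ w' (m v w') := by
        have := hθ.compat_m hyv (hθ.equiv.refl w'); rwa [e1] at this
      exact ⟨m v w', hθ.equiv.trans hzw h1, fact2 h w' hvx⟩

/-- Core of the hard direction, comparable case. -/
theorem hl' {m : A → A → A} {d : A → A → A → A} {r : A → A → Prop}
    (h : IsRegularSMB m d r) {θ σ : A → A → Prop}
    (hθ : IsCongruence m d θ) (hσ : IsCongruence m d σ)
    (meet : ∀ p q, θ p q → σ p q → r p q)
    {x Y t s : A} (hxt : θ x t) (hty : r (m Y t) t)
    (hxs : σ x s) (hsy : r (m Y s) s) (hyx : r (m x Y) Y) : r x Y := by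
  have e1 : m Y t = t := h.reg2 Y t hty
  have e2 : m Y s = s := h.reg2 Y s hsy
  have h1 : θ (m Y x) t := by
    have := hθ.compat_m (hθ.equiv.refl Y) hxt; rwa [e1] at this
  have h2 : σ (m Y x) s := by
    have := hσ.compat_m (hσ.equiv.refl Y) hxs; rwa [e2] at this
  have hx1 : θ x (m Y x) := hθ.equiv.trans hxt (hθ.equiv.symm h1)
  have hx2 : σ x (m Y x) := hσ.equiv.trans hxs (hσ.equiv.symm h2)
  have hr1 : r x (m Y x) := meet _ _ hx1 hx2
  exact h.smb.cong.equiv.trans hr1 (h.smb.cong.equiv.trans (h.smb.comm Y x) hyx)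

/-- The hard lemma: if `θ ∩ σ ⊆ r` then `(θ ∨ r) ∩ (σ ∨ r) ⊆ r`. -/
theorem hl {m : A → A → A} {d : A → A → A → A} {r : A → A → Prop}
    (h : IsRegularSMB m d r) {θ σ : A → A → Prop}
    (hθ : IsCongruence m d θ) (hσ : IsCongruence m d σ)
    (meet : ∀ p q, θ p q → σ p q → r p q)
    {x y : A} (e1 : EGen θ r x y) (e2 : EGen σ r x y) : r x y := by
  have hq := h.smb.cong.equiv
  have half : ∀ x y : A, EGen θ r x y → EGen σ r x y → r x (m x y) := by
    intro x y e1 e2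
    have f1 : EGen θ r x (m x y) := by
      have := egen_m hθ h.smb.cong (EGen.refl x) e1
      rwa [h.smb.idem_m x] at this
    have f2 : EGen σ r x (m x y) := by
      have := egen_m hσ h.smb.cong (EGen.refl x) e2
      rwa [h.smb.idem_m x] at this
    obtain ⟨t, hxt, hlt⟩ := (cp h hθ f1).1
    obtain ⟨s, hxs, hls⟩ := (cp h hσ f2).1
    exact hl' h hθ hσ meet hxt hlt hxs hls (fact3 h x y)
  have hx := half x y e1 e2
  have hy := half y x (EGen.symm e1) (EGen.symm e2)
  exact hq.trans hx (hq.trans (h.smb.comm x y) (hq.symm hy))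

end SMBProof

section SMBQuot

variable {A : Type*}

theorem pullCg {m : A → A → A} {d : A → A → A → A} {r : A → A → Prop}
    (h : IsRegularSMB m d r)
    {mq : Quotient (Setoid.mk r h.smb.cong.equiv) → Quotient (Setoid.mk r h.smb.cong.equiv) →
      Quotient (Setoid.mk r h.smb.cong.equiv)}
    {dq : Quotient (Setoid.mk r h.smb.cong.equiv) → Quotient (Setoid.mk r h.smb.cong.equiv) →
      Quotient (Setoid.mk r h.smb.cong.equiv) → Quotient (Setoid.mk r h.smb.cong.equiv)}
    (hmq : ∀ x y : A, mq (Quotient.mk _ x) (Quotient.mk _ y) = Quotient.mk _ (m x y))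
    (hdq : ∀ x y z : A, dq (Quotient.mk _ x) (Quotient.mk _ y) (Quotient.mk _ z) =
      Quotient.mk _ (d x y z))
    {a b x y : A} (hc : Cg m d a b x y) :
    Cg mq dq (Quotient.mk (Setoid.mk r h.smb.cong.equiv) a)
      (Quotient.mk (Setoid.mk r h.smb.cong.equiv) b)
      (Quotient.mk (Setoid.mk r h.smb.cong.equiv) x)
      (Quotient.mk (Setoid.mk r h.smb.cong.equiv) y) := by
  have hQ := cg_isCongruence mq dq (Quotient.mk (Setoid.mk r h.smb.cong.equiv) a)
    (Quotient.mk (Setoid.mk r h.smb.cong.equiv) b)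
  refine hc (fun p q => Cg mq dq (Quotient.mk (Setoid.mk r h.smb.cong.equiv) a)
      (Quotient.mk (Setoid.mk r h.smb.cong.equiv) b)
      (Quotient.mk (Setoid.mk r h.smb.cong.equiv) p)
      (Quotient.mk (Setoid.mk r h.smb.cong.equiv) q)) ?_ (cg_self mq dq _ _)
  refine ⟨⟨?_, ?_, ?_⟩, ?_, ?_⟩
  · intro p; exact hQ.equiv.refl _
  · intro p q hpq; exact hQ.equiv.symm hpq
  · intro p q w h1 h2; exact hQ.equiv.trans h1 h2
  · intro p p' q q' h1 h2
    have := hQ.compat_m h1 h2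
    rwa [hmq, hmq] at this
  · intro p p' q q' w w' h1 h2 h3
    have := hQ.compat_d h1 h2 h3
    rwa [hdq, hdq] at this

theorem quotCg {m : A → A → A} {d : A → A → A → A} {r : A → A → Prop}
    (h : IsRegularSMB m d r)
    {mq : Quotient (Setoid.mk r h.smb.cong.equiv) → Quotient (Setoid.mk r h.smb.cong.equiv) →
      Quotient (Setoid.mk r h.smb.cong.equiv)}
    {dq : Quotient (Setoid.mk r h.smb.cong.equiv) → Quotient (Setoid.mk r h.smb.cong.equiv) →
      Quotient (Setoid.mk r h.smb.cong.equiv) → Quotient (Setoid.mk r h.smb.cong.equiv)}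
    (hmq : ∀ x y : A, mq (Quotient.mk _ x) (Quotient.mk _ y) = Quotient.mk _ (m x y))
    (hdq : ∀ x y z : A, dq (Quotient.mk _ x) (Quotient.mk _ y) (Quotient.mk _ z) =
      Quotient.mk _ (d x y z))
    {a b x y : A}
    (hc : Cg mq dq (Quotient.mk (Setoid.mk r h.smb.cong.equiv) a)
      (Quotient.mk (Setoid.mk r h.smb.cong.equiv) b)
      (Quotient.mk (Setoid.mk r h.smb.cong.equiv) x)
      (Quotient.mk (Setoid.mk r h.smb.cong.equiv) y)) :
    EGen (Cg m d a b) r x y := by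
  have hr := h.smb.cong
  have hcg := cg_isCongruence m d a b
  let QJ : Quotient (Setoid.mk r h.smb.cong.equiv) →
      Quotient (Setoid.mk r h.smb.cong.equiv) → Prop := fun u v =>
    ∃ p q, Quotient.mk (Setoid.mk r h.smb.cong.equiv) p = u ∧
      Quotient.mk (Setoid.mk r h.smb.cong.equiv) q = v ∧ EGen (Cg m d a b) r p q
  have hcong : IsCongruence mq dq QJ := by
    refine ⟨⟨?_, ?_, ?_⟩, ?_, ?_⟩
    · intro u
      obtain ⟨p, rfl⟩ := Quot.exists_rep u
      exact ⟨p, p, rfl, rfl, EGen.refl p⟩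
    · rintro u v ⟨p, q, rfl, rfl, e⟩
      exact ⟨q, p, rfl, rfl, EGen.symm e⟩
    · rintro u v w ⟨p, q, rfl, hq, e⟩ ⟨p', q', hp', rfl, e'⟩
      have hr' : r q p' := Quotient.exact (hq.trans hp'.symm)
      exact ⟨p, q', rfl, rfl, EGen.trans e (EGen.trans (EGen.baser hr') e')⟩
    · rintro u u' v v' ⟨p, q, rfl, rfl, e⟩ ⟨p', q', rfl, rfl, e'⟩
      exact ⟨m p p', m q q', (hmq p p').symm, (hmq q q').symm,
        egen_m hcg hr e e'⟩
    · rintro u u' v v' w w' ⟨p, q, rfl, rfl, e⟩ ⟨p', q', rfl, rfl, e'⟩ ⟨p'', q'', rfl, rfl, e''⟩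
      exact ⟨d p p' p'', d q q' q'', (hdq p p' p'').symm, (hdq q q' q'').symm,
        egen_d hcg hr e e' e''⟩
  have hab : QJ (Quotient.mk (Setoid.mk r h.smb.cong.equiv) a)
      (Quotient.mk (Setoid.mk r h.smb.cong.equiv) b) :=
    ⟨a, b, rfl, rfl, EGen.base (cg_self m d a b)⟩
  obtain ⟨p, q, hp, hq', e⟩ := hc QJ hcong hab
  exact EGen.trans (EGen.baser (hr.equiv.symm (Quotient.exact hp)))
    (EGen.trans e (EGen.baser (Quotient.exact hq')))

end SMBQuot

/-- In a regular SMB algebra over `~`, `Cg(a,b) ∩ Cg(c,e) ⊆ ~` holds iff the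
intersection of the principal congruences of the quotient algebra `A/~`
generated by `([a]_~,[b]_~)` and by `([c]_~,[e]_~)` is the equality relation
on `A/~`. -/
theorem regular_smb_cg_meet_under_sim {A : Type*} (m : A → A → A)
    (d : A → A → A → A) (r : A → A → Prop) (h : IsRegularSMB m d r)
    (a b c e : A)
    (mq : Quotient (Setoid.mk r h.smb.cong.equiv) → Quotient (Setoid.mk r h.smb.cong.equiv) →
      Quotient (Setoid.mk r h.smb.cong.equiv))
    (dq : Quotient (Setoid.mk r h.smb.cong.equiv) → Quotient (Setoid.mk r h.smb.cong.equiv) →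
      Quotient (Setoid.mk r h.smb.cong.equiv) → Quotient (Setoid.mk r h.smb.cong.equiv))
    (hmq : ∀ x y : A, mq (Quotient.mk _ x) (Quotient.mk _ y) = Quotient.mk _ (m x y))
    (hdq : ∀ x y z : A, dq (Quotient.mk _ x) (Quotient.mk _ y) (Quotient.mk _ z) =
      Quotient.mk _ (d x y z)) :
    (∀ x y : A, Cg m d a b x y → Cg m d c e x y → r x y) ↔
    ((fun u v => Cg mq dq (Quotient.mk _ a) (Quotient.mk _ b) u v ∧
        Cg mq dq (Quotient.mk _ c) (Quotient.mk _ e) u v) =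
      fun u v : Quotient (Setoid.mk r h.smb.cong.equiv) => u = v) := by

  constructor
  · intro meet
    funext u v
    apply propext
    constructor
    · rintro ⟨h1, h2⟩
      obtain ⟨x, rfl⟩ := Quot.exists_rep u
      obtain ⟨y, rfl⟩ := Quot.exists_rep v
      have E1 := quotCg h hmq hdq h1
      have E2 := quotCg h hmq hdq h2
      exact Quotient.sound (hl h (cg_isCongruence m d a b) (cg_isCongruence m d c e) meet E1 E2)
    · rintro rfl
      exact ⟨fun θ hθ _ => hθ.equiv.refl _, fun θ hθ _ => hθ.equiv.refl _⟩
  · intro heq x y h1 h2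
    have q1 := pullCg h hmq hdq h1
    have q2 := pullCg h hmq hdq h2
    have hfe := congrFun (congrFun heq (Quotient.mk (Setoid.mk r h.smb.cong.equiv) x))
      (Quotient.mk (Setoid.mk r h.smb.cong.equiv) y)
    have hxy : Quotient.mk (Setoid.mk r h.smb.cong.equiv) x =
        Quotient.mk (Setoid.mk r h.smb.cong.equiv) y := Eq.mp hfe ⟨q1, q2⟩
    exact Quotient.exact hxy
end

section
/- Let (A; ∧, d) be an SMB algebra over ~, let θ be a congruence of (A; ∧, d), and let (a,b) ∈ ~∨θ. Then there exists e ∈ A with (a,e) ∈ ~∨θ such that (a∧b)∧e ~ e (i.e. [e]_~ ≤ [a∧b]_~ in the semilattice order on ~-classes), and such that every θ-class that meets [a]_~ or [b]_~ also meets [e]_~; that is, for every x ∈ A with x ~ a or x ~ b there exists z ∈ A with z ~ e and (z,x) ∈ θ. -/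
/-!
Since `~` and `θ` are congruences, `~ ∨ θ` is the reflexive-transitive closure of `~ ∪ θ`,
so it suffices to follow a chain `a = b₀, b₁, …, bₙ = b` of `~`- and `θ`-steps, carrying `e`
along. A `~`-step keeps `e`. At a `θ`-step `bᵢ θ bᵢ₊₁`, the `θ`-class of `bᵢ` meets `[e]_~`,
say in `z`; replace `e` by `bᵢ₊₁ ∧ e`. Modulo `θ`, left multiplication by `bᵢ₊₁` acts on
`[e]_~` like left multiplication by `z`, which is the identity because `∧` is the second
projection on `~`-classes. So `bᵢ₊₁ ∧ e` is `θ`-related to `e` and still meets every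
`θ`-class that `[e]_~` meets.
-/

open Relation

section Join

variable {A : Type*} {m : A → A → A} {d : A → A → A → A} {ρ σ : A → A → Prop}

lemma IsCongruence.reflTransGen_sup (hρ : IsCongruence m d ρ) (hσ : IsCongruence m d σ) :
    IsCongruence m d (ReflTransGen (ρ ⊔ σ)) := by
  have : Std.Symm (ρ ⊔ σ) := ⟨fun _ _ => Or.imp (hρ.equiv.symm ·) (hσ.equiv.symm ·)⟩
  have map {f : A → A} (hf : ∀ θ, IsCongruence m d θ → ∀ x y, θ x y → θ (f x) (f y)) :
      ∀ x y, ReflTransGen (ρ ⊔ σ) x y → ReflTransGen (ρ ⊔ σ) (f x) (f y) :=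
    ReflTransGen.lift f fun x y => Or.imp (hf ρ hρ x y) (hf σ hσ x y)
  refine ⟨⟨fun _ => .refl, (Std.Symm.symm _ _ ·), .trans⟩, fun ha hb => ?_, fun ha hb hc => ?_⟩
  · exact (map (fun θ hθ _ _ h => hθ.compat_m h (hθ.equiv.refl _)) _ _ ha).trans
      (map (fun θ hθ _ _ h => hθ.compat_m (hθ.equiv.refl _) h) _ _ hb)
  · exact ((map (fun θ hθ _ _ h => hθ.compat_d h (hθ.equiv.refl _) (hθ.equiv.refl _)) _ _ ha).trans
      (map (fun θ hθ _ _ h => hθ.compat_d (hθ.equiv.refl _) h (hθ.equiv.refl _)) _ _ hb)).trans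
      (map (fun θ hθ _ _ h => hθ.compat_d (hθ.equiv.refl _) (hθ.equiv.refl _) h) _ _ hc)

lemma congJoin_iff_reflTransGen (hρ : IsCongruence m d ρ) (hσ : IsCongruence m d σ) {x y : A} :
    congJoin m d ρ σ x y ↔ ReflTransGen (ρ ⊔ σ) x y :=
  ⟨fun h => h _ (hρ.reflTransGen_sup hσ) (fun _ _ => .single ∘ Or.inl)
      (fun _ _ => .single ∘ Or.inr),
    fun h _ hθ hρθ hσθ => reflTransGen_le_of_equivalence_of_le hθ.equiv
      (fun u v huv => huv.elim (hρθ u v) (hσθ u v)) _ _ h⟩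

end Join

namespace IsSMB

variable {A : Type*} {m : A → A → A} {d : A → A → A → A} {r : A → A → Prop}

def setoid (h : IsSMB m d r) : Setoid A := ⟨r, h.cong.equiv⟩

instance (h : IsSMB m d r) : Min (Quotient h.setoid) :=
  ⟨Quotient.map₂ m fun _ _ ha _ _ hb => h.cong.compat_m ha hb⟩

lemma mk_inf_mk (h : IsSMB m d r) (x y : A) :
    Quotient.mk h.setoid x ⊓ Quotient.mk h.setoid y = Quotient.mk h.setoid (m x y) := rfl

instance (h : IsSMB m d r) : SemilatticeInf (Quotient h.setoid) :=
  SemilatticeInf.mk'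
    (by rintro ⟨x⟩ ⟨y⟩; exact Quotient.sound (h.comm x y))
    (by rintro ⟨x⟩ ⟨y⟩ ⟨z⟩; exact Quotient.sound (h.assoc x y z))
    (by rintro ⟨x⟩; exact congrArg (Quotient.mk _) (h.idem_m x))

lemma mk_le_mk (h : IsSMB m d r) {x y : A} :
    Quotient.mk h.setoid x ≤ Quotient.mk h.setoid y ↔ r (m y x) x :=
  Quotient.eq

end IsSMB

section Witness

variable {A : Type*} {m : A → A → A} {d : A → A → A → A} {r θ : A → A → Prop}

def MeetsClass (r θ : A → A → Prop) (e x : A) : Prop := ∃ z, r z e ∧ θ z x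

lemma MeetsClass.of_rel (hθ : Equivalence θ) {e x : A} (hxe : r x e) : MeetsClass r θ e x :=
  ⟨x, hxe, hθ.refl x⟩

lemma MeetsClass.congr_left (hr : Equivalence r) {e e' x : A} (hee' : r e e')
    (hx : MeetsClass r θ e x) : MeetsClass r θ e' x :=
  let ⟨z, hze, hzx⟩ := hx
  ⟨z, hr.trans hze hee', hzx⟩

lemma IsSMB.rel_mul_left_self (h : IsSMB m d r) (hθ : IsCongruence m d θ) {c w e : A}
    (hcw : θ c w) (hwe : r w e) : θ (m c e) e := by
  have := hθ.compat_m hcw (hθ.equiv.refl e)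
  rwa [h.proj w e hwe] at this

lemma IsSMB.meetsClass_mul (h : IsSMB m d r) (hθ : IsCongruence m d θ) {c w e x : A}
    (hx : MeetsClass r θ e x) (hcw : θ c w) (hwe : r w e) : MeetsClass r θ (m c e) x :=
  let ⟨z, hze, hzx⟩ := hx
  have hwz : r w z := h.cong.equiv.trans hwe (h.cong.equiv.symm hze)
  ⟨m c z, h.cong.compat_m (h.cong.equiv.refl c) hze,
    hθ.equiv.trans (h.rel_mul_left_self hθ hcw hwz) hzx⟩

structure JoinWitness (m : A → A → A) (r θ : A → A → Prop) (a b e : A) : Prop where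
  chain : ReflTransGen (r ⊔ θ) a e
  le : r (m (m a b) e) e
  meets : ∀ x, (r x a ∨ r x b) → MeetsClass r θ e x

namespace JoinWitness

lemma self (h : IsSMB m d r) (hθ : IsCongruence m d θ) (a : A) : JoinWitness m r θ a a a where
  chain := .refl
  le := by rw [h.idem_m, h.idem_m]; exact h.cong.equiv.refl a
  meets _ hx := .of_rel hθ.equiv (hx.elim id id)

lemma rel_step (h : IsSMB m d r) {a b b' e : A} (w : JoinWitness m r θ a b e) (hbb' : r b b') :
    JoinWitness m r θ a b' e where
  chain := w.chain
  le := h.cong.equiv.trans (h.cong.compat_m (h.cong.compat_m (h.cong.equiv.refl a)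
    (h.cong.equiv.symm hbb')) (h.cong.equiv.refl e)) w.le
  meets x hx := w.meets x (hx.imp_right (h.cong.equiv.trans · (h.cong.equiv.symm hbb')))

lemma theta_step (h : IsSMB m d r) (hθ : IsCongruence m d θ) {a b b' e : A}
    (w : JoinWitness m r θ a b e) (hbb' : θ b b') : JoinWitness m r θ a b' (m b' e) := by
  obtain ⟨z, hze, hzb⟩ := w.meets b (.inr (h.cong.equiv.refl b))
  have hb'z : θ b' z := hθ.equiv.symm (hθ.equiv.trans hzb hbb')
  refine ⟨w.chain.tail (.inr (hθ.equiv.symm (h.rel_mul_left_self hθ hb'z hze))), ?_, ?_⟩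
  · have hle := h.mk_le_mk.2 w.le
    rw [← h.mk_inf_mk] at hle
    rw [← h.mk_le_mk, ← h.mk_inf_mk, ← h.mk_inf_mk]
    exact le_inf (inf_le_right.trans (hle.trans inf_le_left)) inf_le_left
  · rintro x (hxa | hxb')
    · exact h.meetsClass_mul hθ (w.meets x (.inl hxa)) hb'z hze
    · have hzb' : r (m z b') (m b' e) :=
        h.cong.equiv.trans (h.cong.compat_m hze (h.cong.equiv.refl b')) (h.comm e b')
      exact (h.meetsClass_mul hθ (.of_rel hθ.equiv hxb') (hθ.equiv.symm hb'z)
        (h.cong.equiv.refl b')).congr_left h.cong.equiv hzb'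

lemma exists_of_reflTransGen (h : IsSMB m d r) (hθ : IsCongruence m d θ) {a b : A}
    (hab : ReflTransGen (r ⊔ θ) a b) : ∃ e, JoinWitness m r θ a b e := by
  induction hab with
  | refl => exact ⟨a, self h hθ a⟩
  | tail _ hstep ih =>
    obtain ⟨e, w⟩ := ih
    rcases hstep with hr | hθ'
    exacts [⟨e, w.rel_step h hr⟩, ⟨_, w.theta_step h hθ hθ'⟩]

end JoinWitness

end Witness

/-- In an SMB algebra over `~`, for a congruence `θ` and `(a,b) ∈ ~∨θ`,
there is `e` with `(a,e) ∈ ~∨θ`, `[e]_~ ≤ [a∧b]_~`, such that every `θ`-class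
meeting `[a]_~` or `[b]_~` also meets `[e]_~`. -/
theorem smb_join_injection {A : Type*} (m : A → A → A) (d : A → A → A → A)
    (r θ : A → A → Prop) (h : IsSMB m d r) (hθ : IsCongruence m d θ)
    (a b : A) (hab : congJoin m d r θ a b) :
    ∃ e : A, congJoin m d r θ a e ∧ r (m (m a b) e) e ∧
      ∀ x : A, (r x a ∨ r x b) → ∃ z : A, r z e ∧ θ z x := by
  obtain ⟨e, w⟩ :=
    JoinWitness.exists_of_reflTransGen h hθ ((congJoin_iff_reflTransGen h.cong hθ).1 hab)
  exact ⟨e, (congJoin_iff_reflTransGen h.cong hθ).2 w.chain, w.le, w.meets⟩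
end

section
/- Let (A; ∧, d) be a regular SMB algebra over ~, let a,b,c,e ∈ A and suppose (c,e) ∈ Cg(a,b) ∨ ~. Then there exist u,v ∈ A such that (c,u) ∈ Cg(a,b), (e,v) ∈ Cg(a,b), u ~ v, and (c∧e)∧u ~ u (i.e. [u]_~ ≤ [c∧e]_~ in the semilattice order on ~-classes). -/
theorem isCongruence_Cg {A : Type*} (m : A → A → A) (d : A → A → A → A) (a b : A) :
    IsCongruence m d (Cg m d a b) where
  equiv := ⟨fun x θ hθ _ => hθ.equiv.refl x,
            fun hxy θ hθ hab => hθ.equiv.symm (hxy θ hθ hab),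
            fun hxy hyz θ hθ hab => hθ.equiv.trans (hxy θ hθ hab) (hyz θ hθ hab)⟩
  compat_m := fun ha hb θ hθ hab => hθ.compat_m (ha θ hθ hab) (hb θ hθ hab)
  compat_d := fun ha hb hc θ hθ hab => hθ.compat_d (ha θ hθ hab) (hb θ hθ hab) (hc θ hθ hab)

set_option maxHeartbeats 1000000 in
/-- In a regular SMB algebra, if `(c,e) ∈ Cg(a,b) ∨ ~`, then there are

`u, v` with `(c,u), (e,v) ∈ Cg(a,b)`, `u ~ v` and `[u]_~ ≤ [c∧e]_~`
(in the semilattice order on `~`-classes, i.e. `(c∧e)∧u ~ u`). -/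
theorem regular_smb_cg_join_below {A : Type*} (m : A → A → A)
    (d : A → A → A → A) (r : A → A → Prop) (h : IsRegularSMB m d r)
    (a b c e : A) (hce : congJoin m d (Cg m d a b) r c e) :
    ∃ u v : A, Cg m d a b c u ∧ Cg m d a b e v ∧ r u v ∧
      r (m (m c e) u) u := by
    classical
  set C := Cg m d a b with hCdef
  have hCcong : IsCongruence m d C := isCongruence_Cg m d a b
  have rEq : Equivalence r := h.smb.cong.equiv
  letI S : Setoid A := ⟨r, rEq⟩
  letI : Min (Quotient S) :=
    ⟨Quotient.map₂ m fun _ _ ha _ _ hb => h.smb.cong.compat_m ha hb⟩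
  letI : SemilatticeInf (Quotient S) :=
    SemilatticeInf.mk'
      (fun x y => Quotient.inductionOn₂ x y fun p q => Quotient.sound (h.smb.comm p q))
      (fun x y z => Quotient.inductionOn₃ x y z fun p q t => Quotient.sound (h.smb.assoc p q t))
      (fun x => Quotient.inductionOn x fun p => by
        show Quotient.mk S (m p p) = Quotient.mk S p
        rw [h.smb.idem_m p])
  set π : A → Quotient S := Quotient.mk S with hπdef
  have hπm : ∀ x y, π (m x y) = π x ⊓ π y := fun _ _ => rfl
  have hπr : ∀ x y, r x y → π x = π y := fun _ _ hxy => Quotient.sound hxy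
  have hrπ : ∀ x y, π x = π y → r x y := fun _ _ hxy => Quotient.exact hxy
  have hπd : ∀ x y z, π (d x y z) = π x ⊓ π y ⊓ π z := by
    intro x y z
    rw [hπr _ _ (h.reg1 x y z), hπm, hπm]
  set θ : A → A → Prop := fun x y =>
    ∃ u v, C x u ∧ C y v ∧ r u v ∧ r (m (m x y) u) u with hθdef
  have hbelow : ∀ {x y u : A}, r (m (m x y) u) u → π u ≤ π x ⊓ π y := by
    intro x y u hu
    have : (π x ⊓ π y) ⊓ π u = π u := by
      rw [← hπm, ← hπm]; exact hπr _ _ hu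
    exact inf_eq_right.mp this
  have hbelow' : ∀ {x y u : A}, π u ≤ π x ⊓ π y → r (m (m x y) u) u := by
    intro x y u hu
    apply hrπ
    rw [hπm, hπm]
    exact inf_eq_right.mpr hu
  have hθcong : IsCongruence m d θ := by
    constructor
    · constructor
      · intro x
        refine ⟨x, x, hCcong.equiv.refl x, hCcong.equiv.refl x, rEq.refl x, ?_⟩
        exact hbelow' (by simp)
      · rintro x y ⟨u, v, hxu, hyv, huv, hle⟩
        refine ⟨v, u, hyv, hxu, rEq.symm huv, ?_⟩
        apply hbelow'
        rw [← hπr _ _ huv]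
        exact (hbelow hle).trans (by rw [inf_comm])
      · rintro x y z ⟨u, v, hxu, hyv, huv, hle⟩ ⟨u', v', hyu', hzv', huv', hle'⟩
        have hux : π u ≤ π x := (hbelow hle).trans inf_le_left
        have huy : π u ≤ π y := (hbelow hle).trans inf_le_right
        have hu'y : π u' ≤ π y := (hbelow hle').trans inf_le_left
        have hu'z : π u' ≤ π z := (hbelow hle').trans inf_le_right
        have hπuv : π u = π v := hπr _ _ huv
        have hπuv' : π u' = π v' := hπr _ _ huv'
        have hvu' : C v u' := hCcong.equiv.trans (hCcong.equiv.symm hyv) hyu'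
        set P₁ := d x u x with hP₁
        set P₂ := d P₁ (m u' u) (m v u) with hP₂
        set Q₁ := d z v' z with hQ₁
        set Q₂ := d Q₁ (m v u') (m y u') with hQ₂
        have hπP₁ : π P₁ = π u := by
          rw [hP₁, hπd]
          exact le_antisymm (inf_le_left.trans inf_le_right)
            (le_inf (le_inf hux le_rfl) hux)
        have hπQ₁ : π Q₁ = π u' := by
          rw [hQ₁, hπd, ← hπuv']
          exact le_antisymm (inf_le_left.trans inf_le_right)
            (le_inf (le_inf hu'z le_rfl) hu'z)
        have hCxP₁ : C x P₁ := by
          have : C P₁ (d x x x) :=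
            hCcong.compat_d (hCcong.equiv.refl x) (hCcong.equiv.symm hxu) (hCcong.equiv.refl x)
          rw [h.smb.idem_d x] at this
          exact hCcong.equiv.symm this
        have hCzQ₁ : C z Q₁ := by
          have : C Q₁ (d z z z) :=
            hCcong.compat_d (hCcong.equiv.refl z) (hCcong.equiv.symm hzv') (hCcong.equiv.refl z)
          rw [h.smb.idem_d z] at this
          exact hCcong.equiv.symm this
        have hCP₁P₂ : C P₁ P₂ := by
          have hc : C (m u' u) (m v u) :=
            hCcong.compat_m (hCcong.equiv.symm hvu') (hCcong.equiv.refl u)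
          have : C P₂ (d P₁ (m v u) (m v u)) :=
            hCcong.compat_d (hCcong.equiv.refl P₁) hc (hCcong.equiv.refl (m v u))
          have hml : d P₁ (m v u) (m v u) = P₁ := by
            apply h.smb.mal_left
            apply hrπ
            rw [hπP₁, hπm, ← hπuv, inf_idem]
          rw [hml] at this
          exact hCcong.equiv.symm this
        have hCQ₁Q₂ : C Q₁ Q₂ := by
          have hc : C (m v u') (m y u') :=
            hCcong.compat_m (hCcong.equiv.symm hyv) (hCcong.equiv.refl u')
          have : C Q₂ (d Q₁ (m y u') (m y u')) :=
            hCcong.compat_d (hCcong.equiv.refl Q₁) hc (hCcong.equiv.refl (m y u'))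
          have hml : d Q₁ (m y u') (m y u') = Q₁ := by
            apply h.smb.mal_left
            apply hrπ
            rw [hπQ₁, hπm]
            exact (inf_eq_right.mpr hu'y).symm
          rw [hml] at this
          exact hCcong.equiv.symm this
        have hπP₂ : π P₂ = π u ⊓ π u' := by
          rw [hP₂, hπd, hπP₁, hπm, hπm, ← hπuv]
          exact le_antisymm
            (le_inf (inf_le_left.trans inf_le_left)
              (inf_le_left.trans (inf_le_right.trans inf_le_left)))
            (le_inf (le_inf inf_le_left (le_inf inf_le_right inf_le_left))
              (le_inf inf_le_left inf_le_left))
        have hπQ₂ : π Q₂ = π u ⊓ π u' := by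
          rw [hQ₂, hπd, hπQ₁, hπm, hπm, ← hπuv]
          exact le_antisymm
            (le_inf (inf_le_left.trans (inf_le_right.trans inf_le_left))
              (inf_le_left.trans inf_le_left))
            (le_inf (le_inf inf_le_right (le_inf inf_le_left inf_le_right))
              (le_inf (inf_le_left.trans huy) inf_le_right))
        refine ⟨P₂, Q₂, hCcong.equiv.trans hCxP₁ hCP₁P₂,
          hCcong.equiv.trans hCzQ₁ hCQ₁Q₂, hrπ _ _ (hπP₂.trans hπQ₂.symm), ?_⟩
        apply hbelow'
        rw [hπP₂]
        exact inf_le_inf hux hu'z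
    · rintro x x' y y' ⟨u, v, hxu, hx'v, huv, hle⟩ ⟨u', v', hyu', hy'v', huv', hle'⟩
      refine ⟨m u u', m v v', hCcong.compat_m hxu hyu', hCcong.compat_m hx'v hy'v',
        h.smb.cong.compat_m huv huv', ?_⟩
      apply hbelow'
      rw [hπm, hπm, hπm]
      have h1 : π u ≤ π x ⊓ π x' := hbelow hle
      have h2 : π u' ≤ π y ⊓ π y' := hbelow hle'
      have h1x := h1.trans inf_le_left
      have h1x' := h1.trans inf_le_right
      have h2y := h2.trans inf_le_left
      have h2y' := h2.trans inf_le_right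
      exact le_inf (le_inf (inf_le_left.trans h1x) (inf_le_right.trans h2y))
        (le_inf (inf_le_left.trans h1x') (inf_le_right.trans h2y'))
    · rintro x x' y y' z z' ⟨u, v, hxu, hx'v, huv, hle⟩ ⟨u', v', hyu', hy'v', huv', hle'⟩
        ⟨u'', v'', hzu'', hz'v'', huv'', hle''⟩
      refine ⟨d u u' u'', d v v' v'', hCcong.compat_d hxu hyu' hzu'',
        hCcong.compat_d hx'v hy'v' hz'v'', h.smb.cong.compat_d huv huv' huv'', ?_⟩
      apply hbelow'
      rw [hπd, hπd, hπd]
      have h1 : π u ≤ π x ⊓ π x' := hbelow hle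
      have h2 : π u' ≤ π y ⊓ π y' := hbelow hle'
      have h3 : π u'' ≤ π z ⊓ π z' := hbelow hle''
      refine le_inf (le_inf (le_inf ?_ ?_) ?_) (le_inf (le_inf ?_ ?_) ?_)
      · exact (inf_le_left.trans inf_le_left).trans (h1.trans inf_le_left)
      · exact (inf_le_left.trans inf_le_right).trans (h2.trans inf_le_left)
      · exact inf_le_right.trans (h3.trans inf_le_left)
      · exact (inf_le_left.trans inf_le_left).trans (h1.trans inf_le_right)
      · exact (inf_le_left.trans inf_le_right).trans (h2.trans inf_le_right)
      · exact inf_le_right.trans (h3.trans inf_le_right)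
  have hCsub : ∀ x y, C x y → θ x y := by
    intro x y hxy
    refine ⟨m x y, m x y, ?_, ?_, rEq.refl _, ?_⟩
    · have : C (m x x) (m x y) := hCcong.compat_m (hCcong.equiv.refl x) hxy
      rw [h.smb.idem_m x] at this; exact this
    · have : C (m y y) (m x y) := hCcong.compat_m (hCcong.equiv.symm hxy) (hCcong.equiv.refl y)
      rw [h.smb.idem_m y] at this; exact this
    · apply hbelow'; rw [hπm]
  have hrsub : ∀ x y, r x y → θ x y := by
    intro x y hxy
    refine ⟨x, y, hCcong.equiv.refl x, hCcong.equiv.refl y, hxy, ?_⟩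
    apply hbelow'
    rw [hπr _ _ hxy, inf_idem]
  exact hce θ hθcong hCsub hrsub
end

section
/- Let (A; ∧, d) be a regular SMB algebra over ~ and let a,b,c,e ∈ A with (c,e) ∈ Cg(a,b). Then there exist unary polynomials p_1, …, p_6 of (A; ∧, d) and elements c = e_0, e_1, …, e_5, e_6 = e of A such that {p_i(a), p_i(b)} = {e_{i-1}, e_i} for all i = 1, …, 6. -/
namespace SMBSix

variable {A : Type*} {m : A → A → A} {d : A → A → A → A} {r : A → A → Prop}

/-- A single polynomial step between `x` and `y` (relative to the generators `a b`). -/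
def Step (m : A → A → A) (d : A → A → A → A) (a b x y : A) : Prop :=
  ∃ p, UnaryPoly m d p ∧ ((p a = x ∧ p b = y) ∨ (p a = y ∧ p b = x))

namespace Step

lemma rfl' (m : A → A → A) (d : A → A → A → A) (a b x : A) : Step m d a b x x :=
  ⟨fun _ => x, .const x, .inl ⟨rfl, rfl⟩⟩

lemma symm {a b x y : A} (hs : Step m d a b x y) : Step m d a b y x := by
  obtain ⟨p, hp, ho⟩ := hs
  exact ⟨p, hp, ho.symm⟩

lemma mapl {a b x y : A} (w : A) (hs : Step m d a b x y) :
    Step m d a b (m x w) (m y w) := by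
  obtain ⟨p, hp, ho⟩ := hs
  refine ⟨fun t => m (p t) w, .meet hp (.const w), ?_⟩
  rcases ho with ⟨h1, h2⟩ | ⟨h1, h2⟩
  · exact .inl ⟨by simp only [h1], by simp only [h2]⟩
  · exact .inr ⟨by simp only [h1], by simp only [h2]⟩

lemma mapr {a b x y : A} (w : A) (hs : Step m d a b x y) :
    Step m d a b (m w x) (m w y) := by
  obtain ⟨p, hp, ho⟩ := hs
  refine ⟨fun t => m w (p t), .meet (.const w) hp, ?_⟩
  rcases ho with ⟨h1, h2⟩ | ⟨h1, h2⟩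
  · exact .inl ⟨by simp only [h1], by simp only [h2]⟩
  · exact .inr ⟨by simp only [h1], by simp only [h2]⟩

lemma mapd1 {a b x y : A} (v w : A) (hs : Step m d a b x y) :
    Step m d a b (d x v w) (d y v w) := by
  obtain ⟨p, hp, ho⟩ := hs
  refine ⟨fun t => d (p t) v w, .malcev hp (.const v) (.const w), ?_⟩
  rcases ho with ⟨h1, h2⟩ | ⟨h1, h2⟩
  · exact .inl ⟨by simp only [h1], by simp only [h2]⟩
  · exact .inr ⟨by simp only [h1], by simp only [h2]⟩

lemma mapd2 {a b x y : A} (v w : A) (hs : Step m d a b x y) :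
    Step m d a b (d v x w) (d v y w) := by
  obtain ⟨p, hp, ho⟩ := hs
  refine ⟨fun t => d v (p t) w, .malcev (.const v) hp (.const w), ?_⟩
  rcases ho with ⟨h1, h2⟩ | ⟨h1, h2⟩
  · exact .inl ⟨by simp only [h1], by simp only [h2]⟩
  · exact .inr ⟨by simp only [h1], by simp only [h2]⟩

lemma mapd3 {a b x y : A} (v w : A) (hs : Step m d a b x y) :
    Step m d a b (d v w x) (d v w y) := by
  obtain ⟨p, hp, ho⟩ := hs
  refine ⟨fun t => d v w (p t), .malcev (.const v) (.const w) hp, ?_⟩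
  rcases ho with ⟨h1, h2⟩ | ⟨h1, h2⟩
  · exact .inl ⟨by simp only [h1], by simp only [h2]⟩
  · exact .inr ⟨by simp only [h1], by simp only [h2]⟩

end Step

section

variable (h : IsRegularSMB m d r)
include h

lemma req (x : A) : r x x := h.smb.cong.equiv.refl x

lemma rsy {x y : A} (hxy : r x y) : r y x := h.smb.cong.equiv.symm hxy

lemma rtr {x y z : A} (hxy : r x y) (hyz : r y z) : r x z :=
  h.smb.cong.equiv.trans hxy hyz

lemma rml (z : A) {x y : A} (hxy : r x y) : r (m x z) (m y z) :=
  h.smb.cong.compat_m hxy (req h z)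

lemma rmr (z : A) {x y : A} (hxy : r x y) : r (m z x) (m z y) :=
  h.smb.cong.compat_m (req h z) hxy

lemma rco (x y : A) : r (m x y) (m y x) := h.smb.comm x y

lemma ras (x y z : A) : r (m (m x y) z) (m x (m y z)) := h.smb.assoc x y z

lemma rdup (x y : A) : r (m x (m x y)) (m x y) := by
  have := rsy h (ras h x x y)
  rwa [h.smb.idem_m] at this

lemma rlc (x y z : A) : r (m x (m y z)) (m y (m x z)) :=
  rtr h (rsy h (ras h x y z)) (rtr h (rml h z (rco h x y)) (ras h y x z))

lemma rabsorb (x y : A) : r (m x (m y x)) (m y x) := by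
  have := rlc h x y x
  rwa [h.smb.idem_m] at this

/-- Shapes of unary polynomials modulo `r`: constant, identity, or `w ∧ ·`. -/
def ShapeOf (m : A → A → A) (r : A → A → Prop) (f : A → A) : Prop :=
  (∃ w, ∀ t, r (f t) w) ∨ (∀ t, r (f t) t) ∨ (∃ w, ∀ t, r (f t) (m w t))

lemma shape_r {f g : A → A} (hfg : ∀ t, r (f t) (g t)) (hg : ShapeOf m r g) :
    ShapeOf m r f := by
  rcases hg with ⟨w, hw⟩ | hid | ⟨w, hw⟩
  · exact Or.inl ⟨w, fun t => rtr h (hfg t) (hw t)⟩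
  · exact Or.inr (Or.inl fun t => rtr h (hfg t) (hid t))
  · exact Or.inr (Or.inr ⟨w, fun t => rtr h (hfg t) (hw t)⟩)

lemma shape_meet {f g : A → A} (hf : ShapeOf m r f) (hg : ShapeOf m r g) :
    ShapeOf m r (fun t => m (f t) (g t)) := by
  rcases hf with ⟨w, hw⟩ | hfid | ⟨w, hw⟩ <;> rcases hg with ⟨v, hv⟩ | hgid | ⟨v, hv⟩
  · exact Or.inl ⟨m w v, fun t => h.smb.cong.compat_m (hw t) (hv t)⟩
  · exact Or.inr (Or.inr ⟨w, fun t => h.smb.cong.compat_m (hw t) (hgid t)⟩)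
  · exact Or.inr (Or.inr ⟨m w v, fun t =>
      rtr h (h.smb.cong.compat_m (hw t) (hv t)) (rsy h (ras h w v t))⟩)
  · exact Or.inr (Or.inr ⟨v, fun t =>
      rtr h (h.smb.cong.compat_m (hfid t) (hv t)) (rco h t v)⟩)
  · refine Or.inr (Or.inl fun t => ?_)
    have := h.smb.cong.compat_m (hfid t) (hgid t)
    rwa [h.smb.idem_m] at this
  · exact Or.inr (Or.inr ⟨v, fun t =>
      rtr h (h.smb.cong.compat_m (hfid t) (hv t)) (rabsorb h t v)⟩)
  · exact Or.inr (Or.inr ⟨m v w, fun t =>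
      rtr h (rtr h (h.smb.cong.compat_m (hw t) (hv t)) (rco h (m w t) v))
        (rsy h (ras h v w t))⟩)
  · refine Or.inr (Or.inr ⟨w, fun t => ?_⟩)
    have := h.smb.cong.compat_m (hw t) (hgid t)
    rwa [h.reg4] at this
  · exact Or.inr (Or.inr ⟨m w v, fun t =>
      rtr h (h.smb.cong.compat_m (hw t) (hv t))
        (rtr h (ras h w t (m v t))
          (rtr h (rmr h w (rabsorb h t v)) (rsy h (ras h w v t))))⟩)

lemma shape {p : A → A} (hp : UnaryPoly m d p) : ShapeOf m r p := by
  induction hp with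
  | id => exact Or.inr (Or.inl fun t => req h t)
  | const c => exact Or.inl ⟨c, fun _ => req h c⟩
  | meet hp hq ihp ihq => exact shape_meet h ihp ihq
  | malcev hp hq hs ihp ihq ihs =>
    exact shape_r h (fun t => h.reg1 _ _ _)
      (shape_meet h (shape_meet h ihp ihq) ihs)

lemma rbu (a b : A) : r (m b (m a b)) (m a b) := by
  have := rlc h b a b
  rwa [h.smb.idem_m] at this

/-- Invariant: every polynomial step preserves the `∧(a∧b)`-class. -/
lemma inv (a b : A) {p : A → A} (hp : UnaryPoly m d p) :
    r (m (p a) (m a b)) (m (p b) (m a b)) := by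
  rcases shape h hp with ⟨w, hw⟩ | hid | ⟨w, hw⟩
  · exact rtr h (rml h _ (hw a)) (rsy h (rml h _ (hw b)))
  · exact rtr h (rtr h (rml h _ (hid a)) (rdup h a b))
      (rsy h (rtr h (rml h _ (hid b)) (rbu h a b)))
  · have ha' : r (m (m w a) (m a b)) (m w (m a b)) :=
      rtr h (ras h w a (m a b)) (rmr h w (rdup h a b))
    have hb' : r (m (m w b) (m a b)) (m w (m a b)) :=
      rtr h (ras h w b (m a b)) (rmr h w (rbu h a b))
    exact rtr h (rtr h (rml h _ (hw a)) ha') (rsy h (rtr h (rml h _ (hw b)) hb'))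

/-- Cross fact: a step is either within a `r`-class, or the meet of its endpoints
lies in the `∧(a∧b)`-class of its `a`-endpoint. -/
lemma crossget (a b : A) {p : A → A} (hp : UnaryPoly m d p) :
    r (p a) (p b) ∨ r (m (p a) (p b)) (m (p a) (m a b)) := by
  rcases shape h hp with ⟨w, hw⟩ | hid | ⟨w, hw⟩
  · exact Or.inl (rtr h (hw a) (rsy h (hw b)))
  · refine Or.inr ?_
    have h1 : r (m (p a) (p b)) (m a b) := h.smb.cong.compat_m (hid a) (hid b)
    have h2 : r (m (p a) (m a b)) (m a (m a b)) := rml h _ (hid a)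
    exact rtr h h1 (rsy h (rtr h h2 (rdup h a b)))
  · refine Or.inr ?_
    have hL : r (m (p a) (p b)) (m w (m a b)) :=
      rtr h (h.smb.cong.compat_m (hw a) (hw b))
        (rtr h (ras h w a (m w b))
          (rtr h (rmr h w (rlc h a w b)) (rdup h w (m a b))))
    have hR : r (m (p a) (m a b)) (m w (m a b)) :=
      rtr h (rml h _ (hw a)) (rtr h (ras h w a (m a b)) (rmr h w (rdup h a b)))
    exact rtr h hL (rsy h hR)

end

/-- A step within a single `r`-class. -/
def WStep (m : A → A → A) (d : A → A → A → A) (r : A → A → Prop) (a b x y : A) : Prop :=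
  Step m d a b x y ∧ r x y

section

variable (h : IsRegularSMB m d r)
include h

lemma wrefl (a b x : A) : WStep m d r a b x x := ⟨Step.rfl' m d a b x, req h x⟩

lemma wcompose {a b x y z : A} (hxy : WStep m d r a b x y) (hyz : WStep m d r a b y z) :
    WStep m d r a b x z := by
  obtain ⟨⟨p, hp, hop⟩, hrxy⟩ := hxy
  obtain ⟨⟨q, hq, hoq⟩, hryz⟩ := hyz
  refine ⟨?_, rtr h hrxy hryz⟩
  rcases hop with ⟨p1, p2⟩ | ⟨p1, p2⟩ <;> rcases hoq with ⟨q1, q2⟩ | ⟨q1, q2⟩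
  · exact ⟨fun t => d (p t) y (q t), .malcev hp (.const y) hq,
      .inl ⟨by simp only [p1, q1]; exact h.smb.mal_left x y hrxy,
            by simp only [p2, q2]; exact h.smb.mal_right z y (rsy h hryz)⟩⟩
  · exact ⟨fun t => d (p t) (q t) z, .malcev hp hq (.const z),
      .inl ⟨by simp only [p1, q1]; exact h.smb.mal_left x z (rtr h hrxy hryz),
            by simp only [p2, q2]; exact h.smb.mal_right z y (rsy h hryz)⟩⟩
  · exact ⟨fun t => d x (p t) (q t), .malcev (.const x) hp hq,
      .inl ⟨by simp only [p1, q1]; exact h.smb.mal_left x y hrxy,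
            by simp only [p2, q2]; exact h.smb.mal_right z x (rsy h (rtr h hrxy hryz))⟩⟩
  · exact ⟨fun t => d (p t) y (q t), .malcev hp (.const y) hq,
      .inr ⟨by simp only [p1, q1]; exact h.smb.mal_right z y (rsy h hryz),
            by simp only [p2, q2]; exact h.smb.mal_left x y hrxy⟩⟩

lemma step_inv {a b e f : A} (hs : Step m d a b e f) :
    r (m e (m a b)) (m f (m a b)) := by
  obtain ⟨p, hp, ho⟩ := hs
  have hi := inv h a b hp
  rcases ho with ⟨h1, h2⟩ | ⟨h1, h2⟩
  · rwa [h1, h2] at hi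
  · rw [h1, h2] at hi; exact rsy h hi

lemma step_cross {a b e f : A} (hs : Step m d a b e f) (hne : ¬ r e f) :
    r (m f e) (m e (m a b)) := by
  obtain ⟨p, hp, ho⟩ := hs
  have hinv := inv h a b hp
  rcases crossget h a b hp with hc | hc
  · rcases ho with ⟨h1, h2⟩ | ⟨h1, h2⟩
    · rw [h1, h2] at hc; exact absurd hc hne
    · rw [h1, h2] at hc; exact absurd (rsy h hc) hne
  · rcases ho with ⟨h1, h2⟩ | ⟨h1, h2⟩
    · rw [h1, h2] at hc
      exact rtr h (rco h f e) hc
    · rw [h1, h2] at hc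
      rw [h1, h2] at hinv
      exact rtr h hc hinv

end

/-- The canonical six-step relation: equality, a single within-class step, or a
full canonical chain `c → c₁ → ĉ → g → ê → e₁ → e` that dives to the
`∧(a∧b)`-level in the middle. -/
def Q (m : A → A → A) (d : A → A → A → A) (r : A → A → Prop) (a b c e : A) : Prop :=
  c = e ∨ (r c e ∧ Step m d a b c e) ∨
    (r (m c (m a b)) (m e (m a b)) ∧
      ∃ c1 ch g eh e1, WStep m d r a b c c1 ∧ Step m d a b c1 ch ∧
        r ch (m c (m a b)) ∧ WStep m d r a b ch g ∧ WStep m d r a b g eh ∧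
        Step m d a b eh e1 ∧ r e1 e ∧ WStep m d r a b e1 e)

section

variable (h : IsRegularSMB m d r)
include h

lemma absorb {a b c e f : A} (hq : Q m d r a b c e) (hs : Step m d a b e f) :
    Q m d r a b c f := by
  by_cases href : r e f
  · rcases hq with rfl | ⟨hrce, w⟩ | ⟨htop, c1, ch, g, eh, e1, h1, h2, h3, h4, h5, h6, h7, h8⟩
    · exact Or.inr (Or.inl ⟨href, hs⟩)
    · obtain ⟨st, hr⟩ := wcompose h ⟨w, hrce⟩ ⟨hs, href⟩
      exact Or.inr (Or.inl ⟨hr, st⟩)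
    · have h8' := wcompose h h8 ⟨hs, href⟩
      exact Or.inr (Or.inr ⟨rtr h htop (rml h (m a b) href),
        c1, ch, g, eh, e1, h1, h2, h3, h4, h5, h6, h8'.2, h8'⟩)
  · have hefu : r (m e (m a b)) (m f (m a b)) := step_inv h hs
    have hfe : r (m f e) (m e (m a b)) := step_cross h hs href
    have stepc : Step m d a b e (m f e) := by
      have := Step.mapl e hs
      rwa [h.smb.idem_m] at this
    have stepf : Step m d a b (m f e) f := by
      have := Step.mapr f hs
      rwa [h.smb.idem_m] at this
    rcases hq with rfl | ⟨hrce, w⟩ | ⟨htop, c1, ch, g, eh, e1, h1, h2, h3, h4, h5, h6, h7, h8⟩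
    · exact Or.inr (Or.inr ⟨hefu, c, m f c, m f c, m f c, f,
        wrefl h a b c, stepc, hfe, wrefl h a b (m f c), wrefl h a b (m f c),
        stepf, req h f, wrefl h a b f⟩)
    · exact Or.inr (Or.inr ⟨rtr h (rml h (m a b) hrce) hefu, e, m f e, m f e, m f e, f,
        ⟨w, hrce⟩, stepc, rtr h hfe (rsy h (rml h (m a b) hrce)),
        wrefl h a b (m f e), wrefl h a b (m f e), stepf, req h f, wrefl h a b f⟩)
    · have hcheh : r ch eh := rtr h h4.2 h5.2
      have heheu : r eh (m e (m a b)) := rtr h (rtr h (rsy h hcheh) h3) htop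
      have F1 : r (m e eh) eh :=
        rtr h (rmr h e heheu) (rtr h (rdup h e (m a b)) (rsy h heheu))
      have F2 : r (m e1 eh) eh := rtr h (rml h eh h7) F1
      have hfu_eu : r (m f (m a b)) (m e (m a b)) := rsy h hefu
      have F3 : r (m f eh) eh :=
        rtr h (rmr h f heheu)
          (rtr h (rlc h f e (m a b))
            (rtr h (rmr h e hfu_eu) (rtr h (rdup h e (m a b)) (rsy h heheu))))
      have F4 : r (m f e) eh := rtr h hfe (rsy h heheu)
      have F5 : r (m f e1) (m f e) := rmr h f h7
      have s1 : Step m d a b eh (m e1 eh) := by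
        have := Step.mapl eh h6
        rwa [h.smb.idem_m] at this
      have W1 : WStep m d r a b eh (m e1 eh) := ⟨s1, rsy h F2⟩
      have W2 : WStep m d r a b (m e1 eh) (m e eh) := ⟨Step.mapl eh h8.1, rml h eh h7⟩
      have W3 : WStep m d r a b (m e eh) (m f eh) := ⟨Step.mapl eh hs, rtr h F1 (rsy h F3)⟩
      have W4 : WStep m d r a b (m f eh) (m f e1) :=
        ⟨Step.mapr f h6, rtr h F3 (rsy h (rtr h F5 F4))⟩
      have W5 : WStep m d r a b (m f e1) (m f e) := ⟨Step.mapr f h8.1, F5⟩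
      have big : WStep m d r a b ch (m f e) :=
        wcompose h h4 (wcompose h h5 (wcompose h W1
          (wcompose h W2 (wcompose h W3 (wcompose h W4 W5)))))
      exact Or.inr (Or.inr ⟨rtr h htop hefu, c1, ch, m f e, m f e, f,
        h1, h2, h3, big, wrefl h a b (m f e), stepf, req h f, wrefl h a b f⟩)

omit h in lemma Q_refl (a b x : A) : Q m d r a b x x := Or.inl rfl

lemma Q_symm {a b c e : A} (hq : Q m d r a b c e) : Q m d r a b e c := by
  rcases hq with rfl | ⟨hr, s⟩ | ⟨htop, c1, ch, g, eh, e1, h1, h2, h3, h4, h5, h6, h7, h8⟩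
  · exact Or.inl rfl
  · exact Or.inr (Or.inl ⟨rsy h hr, s.symm⟩)
  · refine Or.inr (Or.inr ⟨rsy h htop, e1, eh, g, ch, c1,
      ⟨h8.1.symm, rsy h h8.2⟩, h6.symm, ?_, ⟨h5.1.symm, rsy h h5.2⟩,
      ⟨h4.1.symm, rsy h h4.2⟩, h2.symm, rsy h h1.2, ⟨h1.1.symm, rsy h h1.2⟩⟩)
    exact rtr h (rtr h (rsy h (rtr h h4.2 h5.2)) h3) htop

omit h in lemma Q_chain {a b c e : A} (hq : Q m d r a b c e) :
    ∃ z1 z2 z3 z4 z5, Step m d a b c z1 ∧ Step m d a b z1 z2 ∧ Step m d a b z2 z3 ∧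
      Step m d a b z3 z4 ∧ Step m d a b z4 z5 ∧ Step m d a b z5 e := by
  rcases hq with rfl | ⟨_, s⟩ | ⟨_, c1, ch, g, eh, e1, h1, h2, _, h4, h5, h6, _, h8⟩
  · exact ⟨c, c, c, c, c, Step.rfl' m d a b c, Step.rfl' m d a b c, Step.rfl' m d a b c,
      Step.rfl' m d a b c, Step.rfl' m d a b c, Step.rfl' m d a b c⟩
  · exact ⟨e, e, e, e, e, s, Step.rfl' m d a b e, Step.rfl' m d a b e,
      Step.rfl' m d a b e, Step.rfl' m d a b e, Step.rfl' m d a b e⟩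
  · exact ⟨c1, ch, g, eh, e1, h1.1, h2, h4.1, h5.1, h6, h8.1⟩

lemma Q_trans {a b x y z : A} (h1 : Q m d r a b x y) (h2 : Q m d r a b y z) :
    Q m d r a b x z := by
  obtain ⟨w1, w2, w3, w4, w5, t1, t2, t3, t4, t5, t6⟩ := Q_chain h2
  exact absorb h (absorb h (absorb h (absorb h (absorb h (absorb h h1 t1) t2) t3) t4) t5) t6

lemma Q_compat_m {a b x x' y y' : A} (h1 : Q m d r a b x x') (h2 : Q m d r a b y y') :
    Q m d r a b (m x y) (m x' y') := by
  obtain ⟨z1, z2, z3, z4, z5, s1, s2, s3, s4, s5, s6⟩ := Q_chain h1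
  obtain ⟨w1, w2, w3, w4, w5, t1, t2, t3, t4, t5, t6⟩ := Q_chain h2
  have q : Q m d r a b (m x y) (m x' y) :=
    absorb h (absorb h (absorb h (absorb h (absorb h (absorb h (Q_refl a b (m x y))
      (s1.mapl y)) (s2.mapl y)) (s3.mapl y)) (s4.mapl y)) (s5.mapl y)) (s6.mapl y)
  exact absorb h (absorb h (absorb h (absorb h (absorb h (absorb h q
    (t1.mapr x')) (t2.mapr x')) (t3.mapr x')) (t4.mapr x')) (t5.mapr x')) (t6.mapr x')

lemma Q_compat_d {a b x x' y y' z z' : A} (h1 : Q m d r a b x x')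
    (h2 : Q m d r a b y y') (h3 : Q m d r a b z z') :
    Q m d r a b (d x y z) (d x' y' z') := by
  obtain ⟨u1, u2, u3, u4, u5, s1, s2, s3, s4, s5, s6⟩ := Q_chain h1
  obtain ⟨v1, v2, v3, v4, v5, t1, t2, t3, t4, t5, t6⟩ := Q_chain h2
  obtain ⟨w1, w2, w3, w4, w5, o1, o2, o3, o4, o5, o6⟩ := Q_chain h3
  have q1 : Q m d r a b (d x y z) (d x' y z) :=
    absorb h (absorb h (absorb h (absorb h (absorb h (absorb h (Q_refl a b (d x y z))
      (s1.mapd1 y z)) (s2.mapd1 y z)) (s3.mapd1 y z)) (s4.mapd1 y z))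
        (s5.mapd1 y z)) (s6.mapd1 y z)
  have q2 : Q m d r a b (d x y z) (d x' y' z) :=
    absorb h (absorb h (absorb h (absorb h (absorb h (absorb h q1
      (t1.mapd2 x' z)) (t2.mapd2 x' z)) (t3.mapd2 x' z)) (t4.mapd2 x' z))
        (t5.mapd2 x' z)) (t6.mapd2 x' z)
  exact absorb h (absorb h (absorb h (absorb h (absorb h (absorb h q2
    (o1.mapd3 x' y')) (o2.mapd3 x' y')) (o3.mapd3 x' y')) (o4.mapd3 x' y'))
      (o5.mapd3 x' y')) (o6.mapd3 x' y')

lemma Q_cong (a b : A) : IsCongruence m d (Q m d r a b) where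
  equiv := ⟨Q_refl a b, fun hq => Q_symm h hq, fun h1 h2 => Q_trans h h1 h2⟩
  compat_m := fun h1 h2 => Q_compat_m h h1 h2
  compat_d := fun h1 h2 h3 => Q_compat_d h h1 h2 h3

lemma Q_ab (a b : A) : Q m d r a b a b :=
  absorb h (Q_refl a b a) ⟨fun t => t, .id, .inl ⟨rfl, rfl⟩⟩

end

lemma pair_eq {a b x y : A} {p : A → A}
    (ho : (p a = x ∧ p b = y) ∨ (p a = y ∧ p b = x)) :
    ({p a, p b} : Set A) = {x, y} := by
  rcases ho with ⟨h1, h2⟩ | ⟨h1, h2⟩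
  · rw [h1, h2]
  · rw [h1, h2]; exact Set.pair_comm y x

end SMBSix

/-- In a regular SMB algebra, every pair `(c,e) ∈ Cg(a,b)` is connected by a
Mal'cev chain of length 6: there are unary polynomials `p₁,…,p₆` and elements
`c = e₀, e₁, …, e₅, e₆ = e` with `{pᵢ(a), pᵢ(b)} = {eᵢ₋₁, eᵢ}` for all `i`. -/
theorem regular_smb_cg_six_polynomials {A : Type*} (m : A → A → A)
    (d : A → A → A → A) (r : A → A → Prop) (h : IsRegularSMB m d r)
    (a b c e : A) (hce : Cg m d a b c e) :
    ∃ (p : Fin 6 → A → A) (es : Fin 7 → A),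
      es 0 = c ∧ es 6 = e ∧
      ∀ i : Fin 6, UnaryPoly m d (p i) ∧
        ({p i a, p i b} : Set A) = {es i.castSucc, es i.succ} := by
  classical
  have hQ : SMBSix.Q m d r a b c e :=
    hce (SMBSix.Q m d r a b) (SMBSix.Q_cong h a b) (SMBSix.Q_ab h a b)
  obtain ⟨z1, z2, z3, z4, z5, s1, s2, s3, s4, s5, s6⟩ := SMBSix.Q_chain hQ
  obtain ⟨p1, hp1, ho1⟩ := s1
  obtain ⟨p2, hp2, ho2⟩ := s2
  obtain ⟨p3, hp3, ho3⟩ := s3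
  obtain ⟨p4, hp4, ho4⟩ := s4
  obtain ⟨p5, hp5, ho5⟩ := s5
  obtain ⟨p6, hp6, ho6⟩ := s6
  refine ⟨![p1, p2, p3, p4, p5, p6], ![c, z1, z2, z3, z4, z5, e], rfl, rfl, ?_⟩
  intro i
  fin_cases i
  · exact ⟨hp1, SMBSix.pair_eq ho1⟩
  · exact ⟨hp2, SMBSix.pair_eq ho2⟩
  · exact ⟨hp3, SMBSix.pair_eq ho3⟩
  · exact ⟨hp4, SMBSix.pair_eq ho4⟩
  · exact ⟨hp5, SMBSix.pair_eq ho5⟩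
  · exact ⟨hp6, SMBSix.pair_eq ho6⟩
end

section
/- Let (A; ∧, d) be an SMB algebra over ~ (not necessarily finite). Define x∧'y := (x∧y)∧y and d'(x,y,z) := d((y∧'z)∧'x, (x∧'z)∧'y, (x∧'y)∧'z). Then (A; ∧', d') is an SMB algebra over the same congruence ~ which additionally satisfies: (R1) d'(a,b,c) ~ (a∧'b)∧'c for all a,b,c; (R2) a∧'b ~ b implies a∧'b = b; and (R3) d'(x,y,z) = d'((y∧'z)∧'x, (x∧'z)∧'y, (x∧'y)∧'z) for all x,y,z. Moreover, d'(a,b,c) = d(a,b,c) whenever a ~ b and b ~ c. -/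
section SMBHelpers

variable {A : Type*} {m : A → A → A} {d : A → A → A → A} {r : A → A → Prop}

theorem smb_aux_m1_r (h : IsSMB m d r) (x y : A) :
    r (smbMeet1 m x y) (m x y) := by
  have hx := h.assoc x y y
  rw [h.idem_m] at hx
  exact hx

theorem smb_aux_proj1 (h : IsSMB m d r) {a b : A} (hab : r a b) :
    smbMeet1 m a b = b := by
  unfold smbMeet1
  rw [h.proj a b hab, h.idem_m]

/-- `(m1 (m1 x y) z) ~ m (m x y) z`. -/
theorem smb_aux_m1m1 (h : IsSMB m d r) (x y z : A) :
    r (smbMeet1 m (smbMeet1 m x y) z) (m (m x y) z) :=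
  h.cong.equiv.trans (smb_aux_m1_r h _ z)
    (h.cong.compat_m (smb_aux_m1_r h x y) (h.cong.equiv.refl z))

/-- semilattice permutation: `m (m b c) a ~ m (m a b) c` mod r. -/
theorem smb_aux_perm1 (h : IsSMB m d r) (a b c : A) :
    r (m (m b c) a) (m (m a b) c) :=
  h.cong.equiv.symm (h.cong.equiv.trans (h.assoc a b c) (h.comm a (m b c)))

/-- semilattice permutation: `m (m a c) b ~ m (m a b) c` mod r. -/
theorem smb_aux_perm2 (h : IsSMB m d r) (a b c : A) :
    r (m (m a c) b) (m (m a b) c) :=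
  h.cong.equiv.trans (h.assoc a c b)
    (h.cong.equiv.trans (h.cong.compat_m (h.cong.equiv.refl a) (h.comm c b))
      (h.cong.equiv.symm (h.assoc a b c)))

theorem smb_aux_arg1 (h : IsSMB m d r) (a b c : A) :
    r (smbMeet1 m (smbMeet1 m b c) a) (smbMeet1 m (smbMeet1 m a b) c) :=
  h.cong.equiv.trans (smb_aux_m1m1 h b c a)
    (h.cong.equiv.trans (smb_aux_perm1 h a b c)
      (h.cong.equiv.symm (smb_aux_m1m1 h a b c)))

theorem smb_aux_arg2 (h : IsSMB m d r) (a b c : A) :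
    r (smbMeet1 m (smbMeet1 m a c) b) (smbMeet1 m (smbMeet1 m a b) c) :=
  h.cong.equiv.trans (smb_aux_m1m1 h a c b)
    (h.cong.equiv.trans (smb_aux_perm2 h a b c)
      (h.cong.equiv.symm (smb_aux_m1m1 h a b c)))

/-- (R1) for the derived operations. -/
theorem smb_aux_reg1 (h : IsSMB m d r) (a b c : A) :
    r (smbD1 m d a b c) (smbMeet1 m (smbMeet1 m a b) c) := by
  have key := h.cong.compat_d (smb_aux_arg1 h a b c) (smb_aux_arg2 h a b c)
    (h.cong.equiv.refl (smbMeet1 m (smbMeet1 m a b) c))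
  rw [h.idem_d] at key
  exact key

/-- `d₁` agrees with `d` on triples inside one `~`-class. -/
theorem smb_aux_agree (h : IsSMB m d r) {a b c : A} (hab : r a b) (hbc : r b c) :
    smbD1 m d a b c = d a b c := by
  have hac : r a c := h.cong.equiv.trans hab hbc
  unfold smbD1
  rw [smb_aux_proj1 h hbc, smb_aux_proj1 h (h.cong.equiv.symm hac),
      smb_aux_proj1 h hac, smb_aux_proj1 h (h.cong.equiv.symm hbc),
      smb_aux_proj1 h hab, smb_aux_proj1 h hbc]

end SMBHelpers

/-- For any SMB algebra `(A; ∧, d)` over `~` (not necessarily finite), the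
algebra `(A; ∧₁, d₁)` (where `x∧₁y = (x∧y)∧y` and
`d₁(x,y,z) = d((y∧₁z)∧₁x, (x∧₁z)∧₁y, (x∧₁y)∧₁z)`) is an SMB algebra over the
same `~` satisfying regularity conditions (R1)-(R3), and `d₁` agrees with `d`
on triples within a single `~`-class. -/
theorem smb_to_reg_first_three {A : Type*} (m : A → A → A) (d : A → A → A → A)
    (r : A → A → Prop) (h : IsSMB m d r) :
    IsSMB (smbMeet1 m) (smbD1 m d) r ∧
    (∀ a b c : A, r (smbD1 m d a b c) (smbMeet1 m (smbMeet1 m a b) c)) ∧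
    (∀ a b : A, r (smbMeet1 m a b) b → smbMeet1 m a b = b) ∧
    (∀ x y z : A, smbD1 m d x y z =
      smbD1 m d (smbMeet1 m (smbMeet1 m y z) x) (smbMeet1 m (smbMeet1 m x z) y)
        (smbMeet1 m (smbMeet1 m x y) z)) ∧
    (∀ a b c : A, r a b → r b c → smbD1 m d a b c = d a b c) := by
  have e := h.cong.equiv
  refine ⟨?_, smb_aux_reg1 h, ?_, ?_, fun a b c hab hbc => smb_aux_agree h hab hbc⟩
  · refine
      { cong := ?_
        idem_m := ?_
        idem_d := ?_
        comm := ?_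
        assoc := ?_
        proj := ?_
        mal_left := ?_
        mal_right := ?_ }
    · exact
        { equiv := e
          compat_m := fun ha hb => h.cong.compat_m (h.cong.compat_m ha hb) hb
          compat_d := fun ha hb hc =>
            h.cong.compat_d
              (h.cong.compat_m
                (h.cong.compat_m (h.cong.compat_m (h.cong.compat_m hb hc) hc) ha) ha)
              (h.cong.compat_m
                (h.cong.compat_m (h.cong.compat_m (h.cong.compat_m ha hc) hc) hb) hb)
              (h.cong.compat_m
                (h.cong.compat_m (h.cong.compat_m (h.cong.compat_m ha hb) hb) hc) hc) }
    · intro x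
      unfold smbMeet1
      rw [h.idem_m, h.idem_m]
    · intro x
      unfold smbD1
      rw [smb_aux_proj1 h (e.refl x), smb_aux_proj1 h (e.refl x)]
      exact h.idem_d x
    · intro x y
      exact e.trans (smb_aux_m1_r h x y)
        (e.trans (h.comm x y) (e.symm (smb_aux_m1_r h y x)))
    · intro x y z
      refine e.trans (smb_aux_m1m1 h x y z) (e.trans (h.assoc x y z) ?_)
      refine e.trans (h.cong.compat_m (e.refl x) (e.symm (smb_aux_m1_r h y z))) ?_
      exact e.symm (smb_aux_m1_r h x (smbMeet1 m y z))
    · intro a b hab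
      exact smb_aux_proj1 h hab
    · intro a b hab
      show smbD1 m d a b b = a
      unfold smbD1
      rw [smb_aux_proj1 h (e.refl b), smb_aux_proj1 h (e.symm hab),
          smb_aux_proj1 h hab, smb_aux_proj1 h (e.refl b)]
      exact h.mal_left a b hab
    · intro a b hab
      show smbD1 m d b b a = a
      unfold smbD1
      rw [smb_aux_proj1 h (e.symm hab), smb_aux_proj1 h hab,
          smb_aux_proj1 h (e.refl b), smb_aux_proj1 h (e.symm hab)]
      exact h.mal_right a b hab
  · intro a b hrb
    have : r (m a b) b := e.trans (e.symm (smb_aux_m1_r h a b)) hrb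
    exact h.proj _ _ this
  · intro x y z
    have huw := smb_aux_arg1 h x y z
    have hvw := smb_aux_arg2 h x y z
    have huv := e.trans huw (e.symm hvw)
    rw [smb_aux_agree h huv hvw]
    rfl
end

section
/- In any SMB algebra (A; ∧, d) over ~, the six-ary operation t(x_1,x_2,x_3,x_4,x_5,x_6) := d(x_1∧x_2, x_3∧x_4, x_5∧x_6) satisfies, for all x,y ∈ A: t(x,y,x,y,x,y) = x∧y, t(y,x,y,x,x,y) = x∧y, and t(x,y,y,x,y,x) = x∧y. (Hence t is a Taylor operation and the variety of SMB algebras has a Taylor term.) -/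
/-- The six-ary operation `t(x₁,…,x₆) = d(x₁∧x₂, x₃∧x₄, x₅∧x₆)`. -/
def smbTaylor {A : Type*} (m : A → A → A) (d : A → A → A → A)
    (x1 x2 x3 x4 x5 x6 : A) : A :=
  d (m x1 x2) (m x3 x4) (m x5 x6)

/-- In any SMB algebra the operation `t(x₁,…,x₆) = d(x₁∧x₂, x₃∧x₄, x₅∧x₆)`
satisfies the three Taylor identities `t(x,y,x,y,x,y) = t(y,x,y,x,x,y) =
t(x,y,y,x,y,x) = x∧y`. -/
theorem smb_taylor_identities {A : Type*} (m : A → A → A) (d : A → A → A → A)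
    (r : A → A → Prop) (h : IsSMB m d r) :
    ∀ x y : A,
      smbTaylor m d x y x y x y = m x y ∧
      smbTaylor m d y x y x x y = m x y ∧
      smbTaylor m d x y y x y x = m x y := by
  intro x y
  refine ⟨h.idem_d _, h.mal_right _ _ (h.comm x y), h.mal_left _ _ (h.comm x y)⟩
end

section
/- Every regular SMB algebra (A; ∧, d) over ~ satisfies the identities x∧y = d(x,x,y) and x∧y = d(y,x,x) for all x,y ∈ A. -/
/-- Every regular SMB algebra satisfies `x ∧ y = d(x,x,y) = d(y,x,x)`. -/
theorem regular_smb_meet_by_d {A : Type*} (m : A → A → A) (d : A → A → A → A)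
    (r : A → A → Prop) (h : IsRegularSMB m d r) :
    ∀ x y : A, m x y = d x x y ∧ m x y = d y x x := by
  intro x y
  obtain ⟨smb, reg1, reg2, reg3, reg4⟩ := h
  obtain ⟨cong, idem_m, idem_d, comm, assoc, proj, mal_left, mal_right⟩ := smb
  have he := cong.equiv
  have h1 : r (m (m x y) x) (m x y) := by
    have a1 := comm (m x y) x
    have a2 := assoc x x y
    rw [idem_m] at a2
    exact he.trans a1 (he.symm a2)
  have h2 : r (m (m y x) x) (m x y) := by
    have a1 := assoc y x x
    rw [idem_m] at a1
    exact he.trans a1 (comm y x)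
  constructor
  · have e := reg3 x x y
    rw [idem_m] at e
    rw [e]
    exact (mal_right _ _ (he.symm h1)).symm
  · have e := reg3 y x x
    rw [idem_m] at e
    rw [e]
    exact (mal_left _ _ (he.symm h2)).symm
end

section
/- Let (A; ∧, d) be a regular SMB algebra over ~ and let a,b ∈ A. Then for every pair (c,e) ∈ D_{a,b} we have (a∧b)∧c ~ (a∧b)∧e. -/
/-- In a regular SMB algebra, every pair `(c,e) ∈ D_{a,b}` satisfies
`(a∧b)∧c ~ (a∧b)∧e`. -/
theorem regular_smb_dab_same_class {A : Type*} (m : A → A → A)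
    (d : A → A → A → A) (r : A → A → Prop) (h : IsRegularSMB m d r)
    (a b : A) :
    ∀ c e : A, Dab m d a b c e → r (m (m a b) c) (m (m a b) e) := by
  letI S : Setoid A := ⟨r, h.smb.cong.equiv⟩
  let q : A → Quotient S := Quotient.mk S
  have hsound : ∀ {x y : A}, r x y → q x = q y := fun hxy => Quot.sound hxy
  have hexact : ∀ {x y : A}, q x = q y → r x y := fun hxy => Quotient.exact hxy
  let sup : Quotient S → Quotient S → Quotient S :=
    Quotient.map₂ m (fun _ _ hx _ _ hy => h.smb.cong.compat_m hx hy)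
  have hq : ∀ x y : A, sup (q x) (q y) = q (m x y) := fun _ _ => rfl
  have comm : ∀ X Y, sup X Y = sup Y X := by
    intro X Y
    induction X using Quotient.inductionOn
    induction Y using Quotient.inductionOn
    exact hsound (h.smb.comm _ _)
  have assoc : ∀ X Y Z, sup (sup X Y) Z = sup X (sup Y Z) := by
    intro X Y Z
    induction X using Quotient.inductionOn
    induction Y using Quotient.inductionOn
    induction Z using Quotient.inductionOn
    exact hsound (h.smb.assoc _ _ _)
  have idem : ∀ X, sup X X = X := by
    intro X
    induction X using Quotient.inductionOn
    exact congrArg q (h.smb.idem_m _)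
  have key : ∀ P X U, sup (sup P X) (sup P U) = sup P (sup X U) := by
    intro P X U
    calc sup (sup P X) (sup P U) = sup P (sup X (sup P U)) := assoc _ _ _
      _ = sup P (sup (sup X P) U) := by rw [assoc X P U]
      _ = sup P (sup (sup P X) U) := by rw [comm X P]
      _ = sup (sup P (sup P X)) U := (assoc _ _ _).symm
      _ = sup (sup (sup P P) X) U := by rw [assoc P P X]
      _ = sup (sup P X) U := by rw [idem]
      _ = sup P (sup X U) := assoc _ _ _
  have key3 : ∀ P X U V, sup (sup (sup P X) (sup P U)) (sup P V)
      = sup P (sup (sup X U) V) := by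
    intro P X U V
    rw [key P X U, key P (sup X U) V]
  have absorb : ∀ X Y, sup (sup X Y) X = sup X Y := by
    intro X Y
    rw [assoc, comm Y X, ← assoc, idem]
  have absorb2 : ∀ X Y, sup (sup X Y) Y = sup X Y := by
    intro X Y
    rw [assoc, idem]
  have main : ∀ c e, Dab m d a b c e →
      sup (sup (q a) (q b)) (q c) = sup (sup (q a) (q b)) (q e) := by
    intro c e hce
    induction hce with
    | base => rw [absorb, absorb2]
    | base_symm => rw [absorb2, absorb]
    | diag c => rfl
    | @meet x y u v hx hu ihx ihu =>
        rw [← hq x u, ← hq y v, ← key (sup (q a) (q b)) (q x) (q u),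
          ← key (sup (q a) (q b)) (q y) (q v), ihx, ihu]
    | @malcev x y u v s t hx hu hs ihx ihu ihs =>
        rw [hsound (h.reg1 x u s), hsound (h.reg1 y v t),
          ← hq (m x u) s, ← hq x u, ← hq (m y v) t, ← hq y v,
          ← key3 (sup (q a) (q b)) (q x) (q u) (q s),
          ← key3 (sup (q a) (q b)) (q y) (q v) (q t), ihx, ihu, ihs]
  intro c e hce
  apply hexact
  rw [← hq (m a b) c, ← hq (m a b) e, ← hq a b]
  exact main c e hce
end

section
/- Let A be a finite nonempty set and let w be an n-ary weak near-unanimity operation on A with n ≥ 3. Then there exists a finite set B ⊇ A with exactly three additional elements (so |B| = |A| + 3) and an n-ary weak near-unanimity operation v on B such that v restricted to A^n equals w (in particular A is closed under v), and the algebra (B; v) is simple: the only equivalence relations on B compatible with v are the equality relation and the full relation B×B. -/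
/-- A `k`-ary operation `w` on `A` is a weak near-unanimity operation:
it is idempotent and `w(y,x,…,x) = w(x,y,x,…,x) = … = w(x,…,x,y)`. -/
def IsWNU {A : Type*} {k : ℕ} (w : (Fin k → A) → A) : Prop :=
  (∀ x : A, w (fun _ => x) = x) ∧
  ∀ (x y : A) (i j : Fin k),
    w (Function.update (fun _ => x) i y) = w (Function.update (fun _ => x) j y)

/-!
Take `B = A ⊕ {0, 1, 2}` and let `v` be `w` on `Aⁿ`. On every other tuple, `v` depends only on
the set of entries of the tuple; since `(y, x, …, x)` and `(x, …, x, y, x, …, x)` have the same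
set of entries, `v` is automatically a weak near-unanimity operation. The values on sets are chosen
so that the polynomials `x ↦ v(y, z, x, …, x)` carry any collapsed pair of a congruence to a pair
`a ~ 0` with `a ∈ A`, and then to `b ~ 1 ~ a ~ 0 ~ 2` for every `b ∈ A`.
-/

lemma Set.range_update_const {ι α : Type*} [DecidableEq ι] {i j : ι} (hji : j ≠ i) (x y : α) :
    Set.range (Function.update (fun _ : ι => x) i y) = {y, x} := by
  ext z
  simp only [Set.mem_range, Set.mem_insert_iff, Set.mem_singleton_iff]
  constructor
  · rintro ⟨l, rfl⟩
    rcases eq_or_ne l i with rfl | hl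
    · simp
    · simp [hl]
  · rintro (rfl | rfl)
    · exact ⟨i, by simp⟩
    · exact ⟨j, by simp [hji]⟩

namespace WNUExtension

open Sum Function

variable {A : Type*}

section SetValue

open Classical

/-- On a nonempty `S ⊆ {0, 1, 2}` the last two lines give `k` for `S = {k}` and `0` otherwise. -/
noncomputable def setValue (S : Set (A ⊕ Fin 3)) : A ⊕ Fin 3 :=
  if h : ∃ a, inl ⁻¹' S = {a} then
    if (inr 1 ∈ S ↔ inr 2 ∈ S) then inl h.choose else if inr 1 ∈ S then inr 2 else inr 1
  else if (inl ⁻¹' S).Nonempty then inr 1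
  else if inr 0 ∈ S ∨ (inr 1 ∈ S ∧ inr 2 ∈ S) then inr 0
  else if inr 1 ∈ S then inr 1 else inr 2

variable {S : Set (A ⊕ Fin 3)} {a b : A}

lemma setValue_of_forall_inl_mem_iff (h : ∀ b, inl b ∈ S ↔ b = a) :
    setValue S =
      if (inr 1 ∈ S ↔ inr 2 ∈ S) then inl a else if inr 1 ∈ S then inr 2 else inr 1 := by
  have hS : inl ⁻¹' S = {a} := Set.ext h
  have hex : ∃ a, inl ⁻¹' S = {a} := ⟨a, hS⟩
  rw [setValue, dif_pos hex, Set.singleton_injective (hex.choose_spec.symm.trans hS)]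

lemma setValue_of_inl_mem_of_ne (ha : inl a ∈ S) (hb : inl b ∈ S) (hab : a ≠ b) :
    setValue S = inr 1 := by
  have hS : ¬ ∃ c, inl ⁻¹' S = {c} := by
    rintro ⟨c, hc⟩
    have ha' : a ∈ inl ⁻¹' S := ha
    have hb' : b ∈ inl ⁻¹' S := hb
    rw [hc] at ha' hb'
    exact hab (ha'.trans hb'.symm)
  rw [setValue, dif_neg hS, if_pos ⟨a, ha⟩]

lemma setValue_of_forall_inl_notMem (h : ∀ a, inl a ∉ S) :
    setValue S =
      if inr 0 ∈ S ∨ (inr 1 ∈ S ∧ inr 2 ∈ S) then inr 0 else if inr 1 ∈ S then inr 1 else inr 2 := by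
  have hS : inl ⁻¹' S = ∅ := Set.eq_empty_of_forall_notMem h
  rw [setValue, dif_neg (by simp [hS]), if_neg (by simp [hS])]

end SetValue

lemma setValue_singleton_inr (k : Fin 3) : setValue ({inr k} : Set (A ⊕ Fin 3)) = inr k := by
  rw [setValue_of_forall_inl_notMem (by simp)]
  fin_cases k <;> simp

lemma setValue_inl_inr_zero (a : A) : setValue {inl a, inr 0} = inl a := by
  rw [setValue_of_forall_inl_mem_iff (a := a) (by simp)]
  simp

lemma setValue_inl_inr_one (a : A) : setValue {inl a, inr 1} = inr 2 := by
  rw [setValue_of_forall_inl_mem_iff (a := a) (by simp)]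
  simp

lemma setValue_inl_inr_two (a : A) : setValue {inl a, inr 2} = inr 1 := by
  rw [setValue_of_forall_inl_mem_iff (a := a) (by simp)]
  simp

lemma setValue_inl_inr_one_inr_two (a : A) : setValue {inl a, inr 1, inr 2} = inl a := by
  rw [setValue_of_forall_inl_mem_iff (a := a) (by simp)]
  simp

lemma setValue_inr_inr {k l : Fin 3} (hkl : k ≠ l) :
    setValue ({inr k, inr l} : Set (A ⊕ Fin 3)) = inr 0 := by
  rw [setValue_of_forall_inl_notMem (by simp)]
  fin_cases k <;> fin_cases l <;> simp_all

/-- Compatibility with `v`, read off the unary polynomials `x ↦ v(y, z, x, …, x)` at tuples that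
leave `A`. -/
def PreservesSetValue (θ : A ⊕ Fin 3 → A ⊕ Fin 3 → Prop) : Prop :=
  ∀ ⦃x x' : A ⊕ Fin 3⦄ (y z : A ⊕ Fin 3), θ x x' →
    (∃ k, inr k ∈ ({y, z, x} : Set (A ⊕ Fin 3))) → (∃ k, inr k ∈ ({y, z, x'} : Set (A ⊕ Fin 3))) →
    θ (setValue {y, z, x}) (setValue {y, z, x'})

section Simple

variable {θ : A ⊕ Fin 3 → A ⊕ Fin 3 → Prop} {a b : A}

lemma PreservesSetValue.rel_pair (hs : PreservesSetValue θ) {x x' : A ⊕ Fin 3} (h : θ x x')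
    (y : A ⊕ Fin 3) (hx : ∃ k, inr k ∈ ({y, x} : Set (A ⊕ Fin 3)))
    (hx' : ∃ k, inr k ∈ ({y, x'} : Set (A ⊕ Fin 3))) :
    θ (setValue {y, x}) (setValue {y, x'}) := by
  have := hs y y h
  simp only [Set.insert_idem] at this
  exact this hx hx'

lemma rel_inl_zero_of_rel_inl_inr (hs : PreservesSetValue θ) {k : Fin 3}
    (h : θ (inl a) (inr k)) : θ (inl a) (inr 0) := by
  rcases eq_or_ne k 0 with rfl | hk
  · exact h
  · have := hs.rel_pair h (inr 0) ⟨0, by simp⟩ ⟨0, by simp⟩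
    rwa [Set.pair_comm, setValue_inl_inr_zero, setValue_inr_inr hk.symm] at this

lemma forall_rel_of_rel_inl_zero (hθ : Equivalence θ) (hs : PreservesSetValue θ)
    (h : θ (inl a) (inr 0)) (u : A ⊕ Fin 3) : θ u (inl a) := by
  have h20 : θ (inr 2) (inr 0) := by
    have := hs.rel_pair h (inr 1) ⟨1, by simp⟩ ⟨1, by simp⟩
    rwa [Set.pair_comm, setValue_inl_inr_one, setValue_inr_inr (by decide)] at this
  have h1 (b : A) : θ (inl b) (inr 1) := by
    have := hs.rel_pair (hθ.symm h20) (inl b) ⟨0, by simp⟩ ⟨2, by simp⟩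
    rwa [setValue_inl_inr_zero, setValue_inl_inr_two] at this
  rcases u with b | k
  · exact hθ.trans (h1 b) (hθ.symm (h1 a))
  · fin_cases k
    · exact hθ.symm h
    · exact hθ.symm (h1 a)
    · exact hθ.trans h20 (hθ.symm h)

lemma rel_inl_one_of_rel_inl_inl (hθ : Equivalence θ) (hs : PreservesSetValue θ) (hab : a ≠ b)
    (h : θ (inl a) (inl b)) : θ (inl b) (inr 1) := by
  have := hs (inr 0) (inl b) h ⟨0, by simp⟩ ⟨0, by simp⟩
  rw [setValue_of_inl_mem_of_ne (by simp) (by simp) hab.symm, Set.pair_eq_singleton,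
    Set.pair_comm, setValue_inl_inr_zero] at this
  exact hθ.symm this

lemma exists_rel_inl_inr_of_rel_zero_inr (hs : PreservesSetValue θ) {j : Fin 3}
    (h : θ (inr 0) (inr j)) (hj : j ≠ 0) (a : A) : ∃ k, θ (inl a) (inr k) := by
  have := hs.rel_pair h (inl a) ⟨0, by simp⟩ ⟨j, by simp⟩
  rw [setValue_inl_inr_zero] at this
  obtain rfl | rfl : j = 1 ∨ j = 2 := by omega
  · exact ⟨2, by rwa [setValue_inl_inr_one] at this⟩
  · exact ⟨1, by rwa [setValue_inl_inr_two] at this⟩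

lemma rel_inl_two_of_rel_two_one (hs : PreservesSetValue θ) (h : θ (inr 2) (inr 1)) (a : A) :
    θ (inl a) (inr 2) := by
  have := hs (inl a) (inr 1) h ⟨1, by simp⟩ ⟨1, by simp⟩
  rwa [setValue_inl_inr_one_inr_two, Set.pair_eq_singleton, setValue_inl_inr_one] at this

lemma exists_rel_inl_inr_of_rel_inr_inr (hθ : Equivalence θ) (hs : PreservesSetValue θ)
    {k l : Fin 3} (hkl : k ≠ l) (h : θ (inr k) (inr l)) (a : A) : ∃ j, θ (inl a) (inr j) := by
  fin_cases k <;> fin_cases l <;> simp at hkl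
  · exact exists_rel_inl_inr_of_rel_zero_inr hs h (by decide) a
  · exact exists_rel_inl_inr_of_rel_zero_inr hs h (by decide) a
  · exact exists_rel_inl_inr_of_rel_zero_inr hs (hθ.symm h) (by decide) a
  · exact ⟨2, rel_inl_two_of_rel_two_one hs (hθ.symm h) a⟩
  · exact exists_rel_inl_inr_of_rel_zero_inr hs (hθ.symm h) (by decide) a
  · exact ⟨2, rel_inl_two_of_rel_two_one hs h a⟩

lemma exists_rel_inl_inr [Nonempty A] (hθ : Equivalence θ) (hs : PreservesSetValue θ)
    {x y : A ⊕ Fin 3} (h : θ x y) (hne : x ≠ y) : ∃ a k, θ (inl a) (inr k) := by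
  rcases x with a | k <;> rcases y with b | l
  · exact ⟨b, 1, rel_inl_one_of_rel_inl_inl hθ hs (fun hab => hne (congrArg inl hab)) h⟩
  · exact ⟨a, l, h⟩
  · exact ⟨b, k, hθ.symm h⟩
  · exact ⟨_, exists_rel_inl_inr_of_rel_inr_inr hθ hs (fun hkl => hne (congrArg inr hkl)) h
      (Classical.arbitrary A)⟩

theorem PreservesSetValue.eq_or_eq_top [Nonempty A] (hθ : Equivalence θ)
    (hs : PreservesSetValue θ) : (θ = fun x y => x = y) ∨ (θ = fun _ _ => True) := by
  by_cases hdiag : ∀ x y, θ x y → x = y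
  · left
    funext x y
    exact propext ⟨hdiag x y, fun hxy => hxy ▸ hθ.refl x⟩
  · right
    push Not at hdiag
    obtain ⟨x, y, hxy, hne⟩ := hdiag
    obtain ⟨a, k, hak⟩ := exists_rel_inl_inr hθ hs hxy hne
    have hall := forall_rel_of_rel_inl_zero hθ hs (rel_inl_zero_of_rel_inl_inr hs hak)
    funext x y
    exact eq_true (hθ.trans (hall x) (hθ.symm (hall y)))

end Simple

variable {n : ℕ}

noncomputable def op (w : (Fin n → A) → A) (t : Fin n → A ⊕ Fin 3) : A ⊕ Fin 3 :=
  if h : ∀ i, (t i).isLeft then inl (w fun i => (t i).getLeft (h i)) else setValue (Set.range t)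

lemma op_inl (w : (Fin n → A) → A) (x : Fin n → A) : op w (fun i => inl (x i)) = inl (w x) := by
  simp [op]

lemma op_of_inr_mem_range (w : (Fin n → A) → A) {t : Fin n → A ⊕ Fin 3} {k : Fin 3}
    (h : inr k ∈ Set.range t) : op w t = setValue (Set.range t) := by
  obtain ⟨i, hi⟩ := h
  exact dif_neg fun hall => by simpa [hi] using hall i

lemma isWNU_op {w : (Fin n → A) → A} (hw : IsWNU w) (hn : 1 < n) : IsWNU (op w) := by
  have : Nontrivial (Fin n) := Fin.nontrivial_iff_two_le.mpr hn
  refine ⟨fun x => ?_, fun x y i j => ?_⟩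
  · rcases x with a | k
    · rw [op_inl w fun _ => a, hw.1]
    · rw [op_of_inr_mem_range w ⟨⟨0, by omega⟩, rfl⟩, Set.range_const, setValue_singleton_inr]
  · have hupdate (l : Fin n) (hxy : ∃ k, inr k ∈ ({y, x} : Set (A ⊕ Fin 3))) :
        op w (update (fun _ => x) l y) = setValue {y, x} := by
      obtain ⟨l', hl'⟩ := exists_ne l
      obtain ⟨k, hk⟩ := hxy
      rw [← Set.range_update_const hl'] at hk ⊢
      exact op_of_inr_mem_range w hk
    rcases x with a | k <;> rcases y with b | l
    · have hcomp (l : Fin n) : update (fun _ => inl a) l (inl b) =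
          fun m => (inl (update (fun _ => a) l b m) : A ⊕ Fin 3) :=
        (comp_update inl (fun _ => a) l b).symm
      rw [hcomp, hcomp, op_inl, op_inl, hw.2 a b i j]
    all_goals rw [hupdate i (by simp), hupdate j (by simp)]

lemma preservesSetValue_of_compatible {m : ℕ} {w : (Fin (m + 3) → A) → A}
    {θ : A ⊕ Fin 3 → A ⊕ Fin 3 → Prop} (hθ : ∀ x, θ x x)
    (hc : ∀ xs ys : Fin (m + 3) → A ⊕ Fin 3, (∀ i, θ (xs i) (ys i)) → θ (op w xs) (op w ys)) :
    PreservesSetValue θ := by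
  intro x x' y z h ⟨k, hk⟩ ⟨k', hk'⟩
  let t (u : A ⊕ Fin 3) : Fin (m + 3) → A ⊕ Fin 3 := Fin.cons y (Fin.cons z fun _ => u)
  have hrange (u : A ⊕ Fin 3) : Set.range (t u) = {y, z, u} := by
    simp only [t, Fin.range_cons, Set.range_const]
  have := hc (t x) (t x') (by simpa [Fin.forall_fin_succ, t] using ⟨hθ y, hθ z, h⟩)
  rw [← hrange] at hk hk'
  rwa [op_of_inr_mem_range w hk, op_of_inr_mem_range w hk', hrange, hrange] at this

end WNUExtension

open WNUExtension in
/-- Every finite algebra with an `n`-ary weak near-unanimity operation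
(`n ≥ 3`) embeds into a finite simple algebra with an `n`-ary weak
near-unanimity operation, obtained by adding exactly three new elements. -/
theorem wnu_embeds_in_simple {A : Type u} [Fintype A] [Nonempty A] {n : ℕ}
    (hn : 3 ≤ n) (w : (Fin n → A) → A) (hw : IsWNU w) :
    ∃ (B : Type u) (_ : Fintype B) (ι : A ↪ B) (v : (Fin n → B) → B),
      Fintype.card B = Fintype.card A + 3 ∧
      IsWNU v ∧
      (∀ x : Fin n → A, v (fun i => ι (x i)) = ι (w x)) ∧
      (∀ θ : B → B → Prop, Equivalence θ →
        (∀ xs ys : Fin n → B, (∀ i, θ (xs i) (ys i)) → θ (v xs) (v ys)) →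
        (θ = fun x y => x = y) ∨ (θ = fun _ _ => True)) := by
  obtain ⟨m, rfl⟩ := Nat.exists_eq_add_of_le' hn
  refine ⟨A ⊕ Fin 3, inferInstance, Function.Embedding.inl, op w, by simp, isWNU_op hw (by omega),
    op_inl w, fun θ hθ hc => ?_⟩
  exact (preservesSetValue_of_compatible hθ.refl hc).eq_or_eq_top hθ
end
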